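/- arXiv:1912.13421 — 4 statements merged into one kernel-verified Lean document; each statement's English description precedes it below -/
import Mathlib

section
/- Under the above setup, the squared bias of the MNLS estimator satisfies, for every m: B² = θᵀ(I − Σ̂†Σ̂)Σ(I − Σ̂†Σ̂)θ ≤ 2‖θ‖² (λ_{m+1} + ‖Σ_{j=1}^m √λⱼ (P̂ⱼ − Pⱼ)‖²) (‖Σ_{j=1}^m (P̂ⱼ − Pⱼ)‖² + Σ_{j=m+1}^d ‖Pⱼθ‖² / ‖θ‖²). -/
/-!
Write `y = (1 - Σ̂†Σ̂) θ`, so that the bias is `yᵀ Σ y = ∑_{j<d} λⱼ ‖Pⱼ y‖²`. The tail `j ≥ m`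
contributes at most `λ_m ‖y‖²` by monotonicity of the eigenvalues (indices start at 0, so `λ_m`
is the paper's `λ_{m+1}`). For `j < m ≤ n` we have
`P̂ⱼ y = 0`, so `∑_{j<m} √λⱼ Pⱼ y = -∑_{j<m} √λⱼ (P̂ⱼ - Pⱼ) y` and the head is at most
`‖∑_{j<m} √λⱼ (P̂ⱼ - Pⱼ)‖² ‖y‖²`. Finally `y` is also the projection of
`θ - ∑_{j<m} P̂ⱼ θ = ∑_{j≥m} Pⱼ θ - ∑_{j<m} (P̂ⱼ - Pⱼ) θ`, which gives
`‖y‖² ≤ 2 ‖∑_{j<m} (P̂ⱼ - Pⱼ)‖² ‖θ‖² + 2 ∑_{j≥m} ‖Pⱼ θ‖²`.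
-/

open Matrix Finset

/-- Operator (spectral) norm of a real matrix. -/
noncomputable def opNorm {m n : Type*} [Fintype m] [Fintype n] [DecidableEq n]
    (A : Matrix m n ℝ) : ℝ :=
  ‖LinearMap.toContinuousLinearMap (Matrix.toEuclideanLin A)‖

section DotProduct

variable {ι : Type*} [Fintype ι]

theorem dotProduct_self_nonneg (v : ι → ℝ) : 0 ≤ v ⬝ᵥ v :=
  Finset.sum_nonneg fun i _ => mul_self_nonneg (v i)

theorem sum_sq_eq_dotProduct_self (v : ι → ℝ) : ∑ i, v i ^ 2 = v ⬝ᵥ v := by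
  simp only [dotProduct, sq]

theorem dotProduct_self_sub_le (v w : ι → ℝ) :
    (v - w) ⬝ᵥ (v - w) ≤ 2 * (v ⬝ᵥ v) + 2 * (w ⬝ᵥ w) := by
  have h := dotProduct_self_nonneg (v + w)
  simp only [add_dotProduct, dotProduct_add, sub_dotProduct, dotProduct_sub,
    dotProduct_comm w v] at h ⊢
  linarith

theorem mulVec_dotProduct_mulVec (A : Matrix ι ι ℝ) (u w : ι → ℝ) :
    (A *ᵥ u) ⬝ᵥ (A *ᵥ w) = u ⬝ᵥ ((Aᵀ * A) *ᵥ w) := by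
  rw [← mulVec_mulVec, dotProduct_transpose_mulVec, dotProduct_comm]

theorem dotProduct_self_eq_norm_toLp_sq (v : ι → ℝ) : v ⬝ᵥ v = ‖WithLp.toLp 2 v‖ ^ 2 := by
  rw [← real_inner_self_eq_norm_sq, EuclideanSpace.inner_toLp_toLp, star_trivial]

theorem dotProduct_mulVec_self_le_opNorm_sq {κ : Type*} [Fintype κ] [DecidableEq ι]
    (A : Matrix κ ι ℝ) (x : ι → ℝ) : (A *ᵥ x) ⬝ᵥ (A *ᵥ x) ≤ opNorm A ^ 2 * (x ⬝ᵥ x) := by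
  rw [dotProduct_self_eq_norm_toLp_sq, dotProduct_self_eq_norm_toLp_sq, ← mul_pow]
  gcongr
  exact (LinearMap.toContinuousLinearMap (toEuclideanLin A)).le_opNorm (WithLp.toLp 2 x)

end DotProduct

section Projector

variable {ι : Type*} [Fintype ι] {Q : Matrix ι ι ℝ}

theorem dotProduct_mulVec_self_of_proj (hQ : Qᵀ = Q) (hQQ : IsIdempotentElem Q) (z : ι → ℝ) :
    (Q *ᵥ z) ⬝ᵥ (Q *ᵥ z) = z ⬝ᵥ (Q *ᵥ z) := by
  rw [mulVec_dotProduct_mulVec, hQ, hQQ.eq]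

theorem dotProduct_mulVec_self_le_of_proj (hQ : Qᵀ = Q) (hQQ : IsIdempotentElem Q)
    (z : ι → ℝ) : (Q *ᵥ z) ⬝ᵥ (Q *ᵥ z) ≤ z ⬝ᵥ z := by
  have h := dotProduct_self_nonneg (z - Q *ᵥ z)
  have hzQ : (Q *ᵥ z) ⬝ᵥ z = z ⬝ᵥ (Q *ᵥ z) := dotProduct_comm _ _
  rw [sub_dotProduct, dotProduct_sub, dotProduct_sub, dotProduct_mulVec_self_of_proj hQ hQQ,
    hzQ] at h
  rw [dotProduct_mulVec_self_of_proj hQ hQQ]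
  linarith

end Projector

structure IsOrthogonalProjectorFamily {κ ι : Type*} [Fintype ι] (P : κ → Matrix ι ι ℝ)
    (s : Finset κ) : Prop where
  transpose_eq : ∀ j ∈ s, (P j)ᵀ = P j
  isIdempotentElem : ∀ j ∈ s, IsIdempotentElem (P j)
  mul_eq_zero_of_ne : ∀ i ∈ s, ∀ j ∈ s, i ≠ j → P i * P j = 0

theorem isOrthogonalProjectorFamily_range {ι : Type*} [Fintype ι] {P : ℕ → Matrix ι ι ℝ}
    {d : ℕ} (hsymm : ∀ j < d, (P j)ᵀ = P j)
    (hidem : ∀ j < d, P j * P j = P j)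
    (horth : ∀ i < d, ∀ j < d, i ≠ j → P i * P j = 0) :
    IsOrthogonalProjectorFamily P (range d) where
  transpose_eq j hj := hsymm j (mem_range.1 hj)
  isIdempotentElem j hj := hidem j (mem_range.1 hj)
  mul_eq_zero_of_ne i hi j hj := horth i (mem_range.1 hi) j (mem_range.1 hj)

namespace IsOrthogonalProjectorFamily

variable {κ ι : Type*} [Fintype ι] {P : κ → Matrix ι ι ℝ} {s t : Finset κ}

theorem mono (hP : IsOrthogonalProjectorFamily P s) (hts : t ⊆ s) :
    IsOrthogonalProjectorFamily P t where
  transpose_eq j hj := hP.transpose_eq j (hts hj)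
  isIdempotentElem j hj := hP.isIdempotentElem j (hts hj)
  mul_eq_zero_of_ne i hi j hj := hP.mul_eq_zero_of_ne i (hts hi) j (hts hj)

theorem transpose_sum_smul (hP : IsOrthogonalProjectorFamily P s) (a : κ → ℝ) :
    (∑ j ∈ s, a j • P j)ᵀ = ∑ j ∈ s, a j • P j := by
  rw [transpose_sum]
  exact sum_congr rfl fun j hj => by rw [transpose_smul, hP.transpose_eq j hj]

theorem transpose_sum (hP : IsOrthogonalProjectorFamily P s) :
    (∑ j ∈ s, P j)ᵀ = ∑ j ∈ s, P j := by
  simpa using hP.transpose_sum_smul 1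

theorem sum_smul_mul_sum_smul (hP : IsOrthogonalProjectorFamily P s) (a b : κ → ℝ) :
    (∑ j ∈ s, a j • P j) * (∑ j ∈ s, b j • P j) = ∑ j ∈ s, (a j * b j) • P j := by
  rw [sum_mul_sum]
  refine sum_congr rfl fun i hi => ?_
  rw [sum_eq_single i]
  · rw [smul_mul_smul_comm, (hP.isIdempotentElem i hi).eq]
  · intro j hj hji
    rw [smul_mul_smul_comm, hP.mul_eq_zero_of_ne i hi j hj hji.symm, smul_zero]
  · exact fun h => absurd hi h

theorem isIdempotentElem_sum (hP : IsOrthogonalProjectorFamily P s) :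
    IsIdempotentElem (∑ j ∈ s, P j) := by
  unfold IsIdempotentElem
  simpa using hP.sum_smul_mul_sum_smul 1 1

theorem mul_sum_of_mem (hP : IsOrthogonalProjectorFamily P s) {j : κ} (hj : j ∈ s) :
    P j * ∑ i ∈ s, P i = P j := by
  rw [mul_sum, sum_eq_single j (fun i hi hij => hP.mul_eq_zero_of_ne j hj i hi hij.symm)
    (fun h => absurd hj h)]
  exact (hP.isIdempotentElem j hj).eq

theorem sum_mul_of_mem (hP : IsOrthogonalProjectorFamily P s) {j : κ} (hj : j ∈ s) :
    (∑ i ∈ s, P i) * P j = P j := by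
  rw [sum_mul, sum_eq_single j (fun i hi hij => hP.mul_eq_zero_of_ne i hi j hj hij)
    (fun h => absurd hj h)]
  exact (hP.isIdempotentElem j hj).eq

theorem dotProduct_sum_mulVec_self (hP : IsOrthogonalProjectorFamily P s) (z : ι → ℝ) :
    ((∑ j ∈ s, P j) *ᵥ z) ⬝ᵥ ((∑ j ∈ s, P j) *ᵥ z) = ∑ j ∈ s, (P j *ᵥ z) ⬝ᵥ (P j *ᵥ z) := by
  rw [dotProduct_mulVec_self_of_proj hP.transpose_sum hP.isIdempotentElem_sum, sum_mulVec,
    dotProduct_sum]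
  exact sum_congr rfl fun j hj =>
    (dotProduct_mulVec_self_of_proj (hP.transpose_eq j hj) (hP.isIdempotentElem j hj) z).symm

theorem dotProduct_sum_smul_mulVec_le (hP : IsOrthogonalProjectorFamily P s) {a : κ → ℝ} {c : ℝ}
    (ha : ∀ j ∈ s, a j ≤ c) (hc : 0 ≤ c) (y : ι → ℝ) :
    y ⬝ᵥ ((∑ j ∈ s, a j • P j) *ᵥ y) ≤ c * (y ⬝ᵥ y) := by
  have hPy : ∀ j ∈ s, y ⬝ᵥ (P j *ᵥ y) = (P j *ᵥ y) ⬝ᵥ (P j *ᵥ y) := fun j hj =>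
    (dotProduct_mulVec_self_of_proj (hP.transpose_eq j hj) (hP.isIdempotentElem j hj) y).symm
  calc y ⬝ᵥ ((∑ j ∈ s, a j • P j) *ᵥ y) = ∑ j ∈ s, a j * (y ⬝ᵥ (P j *ᵥ y)) := by
        simp only [sum_mulVec, dotProduct_sum, smul_mulVec, dotProduct_smul, smul_eq_mul]
    _ ≤ ∑ j ∈ s, c * (y ⬝ᵥ (P j *ᵥ y)) := by
        gcongr with j hj
        · rw [hPy j hj]; exact dotProduct_self_nonneg _
        · exact ha j hj
    _ = c * ((∑ j ∈ s, P j) *ᵥ y) ⬝ᵥ ((∑ j ∈ s, P j) *ᵥ y) := by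
        rw [← mul_sum, hP.dotProduct_sum_mulVec_self, sum_congr rfl hPy]
    _ ≤ c * (y ⬝ᵥ y) := by
        gcongr
        exact dotProduct_mulVec_self_le_of_proj hP.transpose_sum hP.isIdempotentElem_sum y

end IsOrthogonalProjectorFamily

section Spectral

variable {ι : Type*} [Fintype ι] {P : ℕ → Matrix ι ι ℝ}

theorem sum_smul_sub_mulVec_eq_neg {Phat : ℕ → Matrix ι ι ℝ} {s : Finset ℕ} {y : ι → ℝ}
    (c : ℕ → ℝ) (hy : ∀ j ∈ s, Phat j *ᵥ y = 0) :
    (∑ j ∈ s, c j • (Phat j - P j)) *ᵥ y = -((∑ j ∈ s, c j • P j) *ᵥ y) := by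
  simp only [sum_mulVec, smul_mulVec, sub_mulVec, ← sum_neg_distrib]
  exact sum_congr rfl fun j hj => by rw [hy j hj, zero_sub, smul_neg]

theorem dotProduct_sum_smul_mulVec_le_of_antitone {d m : ℕ} {lam : ℕ → ℝ}
    (hP : IsOrthogonalProjectorFamily P (range d)) (hmd : m < d)
    (hlam_mono : ∀ i j, i ≤ j → j < d → lam j ≤ lam i) (hlam_nonneg : ∀ j < d, 0 ≤ lam j)
    (y : ι → ℝ) :
    y ⬝ᵥ ((∑ j ∈ range d, lam j • P j) *ᵥ y)
      ≤ ((∑ j ∈ range m, √(lam j) • P j) *ᵥ y) ⬝ᵥ ((∑ j ∈ range m, √(lam j) • P j) *ᵥ y)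
        + lam m * (y ⬝ᵥ y) := by
  have hhead := hP.mono (range_subset_range.2 hmd.le)
  have htail : IsOrthogonalProjectorFamily P (Ico m d) :=
    hP.mono fun j hj => mem_range.2 (mem_Ico.1 hj).2
  have hhead_sq : (∑ j ∈ range m, √(lam j) • P j)ᵀ * (∑ j ∈ range m, √(lam j) • P j)
      = ∑ j ∈ range m, lam j • P j := by
    rw [hhead.transpose_sum_smul, hhead.sum_smul_mul_sum_smul]
    exact sum_congr rfl fun j hj => by
      rw [Real.mul_self_sqrt (hlam_nonneg j ((mem_range.1 hj).trans hmd))]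
  have htail_le := htail.dotProduct_sum_smul_mulVec_le (a := lam)
    (fun j hj => hlam_mono m j (mem_Ico.1 hj).1 (mem_Ico.1 hj).2) (hlam_nonneg m hmd) y
  rw [mulVec_dotProduct_mulVec, hhead_sq, ← sum_range_add_sum_Ico _ hmd.le, add_mulVec,
    dotProduct_add]
  linarith

theorem dotProduct_proj_mulVec_self_le_of_mul_eq_zero [DecidableEq ι] {Phat : ℕ → Matrix ι ι ℝ}
    {Q : Matrix ι ι ℝ} {d m : ℕ} (hQ : Qᵀ = Q) (hQQ : IsIdempotentElem Q)
    (hQPhat : ∀ j ∈ range m, Q * Phat j = 0)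
    (hP : IsOrthogonalProjectorFamily P (range d)) (hPsum : ∑ j ∈ range d, P j = 1)
    (hmd : m ≤ d) (θ : ι → ℝ) :
    (Q *ᵥ θ) ⬝ᵥ (Q *ᵥ θ)
      ≤ 2 * (opNorm (∑ j ∈ range m, (Phat j - P j)) ^ 2 * (θ ⬝ᵥ θ))
        + 2 * ∑ j ∈ Ico m d, (P j *ᵥ θ) ⬝ᵥ (P j *ᵥ θ) := by
  set D := ∑ j ∈ range m, (Phat j - P j) with hD
  set R := ∑ j ∈ Ico m d, P j
  have hθ : θ = R *ᵥ θ + (∑ j ∈ range m, P j) *ᵥ θ := by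
    rw [← add_mulVec, add_comm, sum_range_add_sum_Ico _ hmd, hPsum, one_mulVec]
  have hQθ : Q *ᵥ θ = Q *ᵥ (R *ᵥ θ - D *ᵥ θ) := by
    have hQ_head : Q *ᵥ ((∑ j ∈ range m, Phat j) *ᵥ θ) = 0 := by
      rw [mulVec_mulVec, mul_sum, sum_eq_zero hQPhat, zero_mulVec]
    rw [hD, sum_sub_distrib, sub_mulVec, sub_sub_eq_add_sub, ← hθ, mulVec_sub, hQ_head, sub_zero]
  calc (Q *ᵥ θ) ⬝ᵥ (Q *ᵥ θ) ≤ (R *ᵥ θ - D *ᵥ θ) ⬝ᵥ (R *ᵥ θ - D *ᵥ θ) := by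
        rw [hQθ]; exact dotProduct_mulVec_self_le_of_proj hQ hQQ _
    _ ≤ 2 * ((R *ᵥ θ) ⬝ᵥ (R *ᵥ θ)) + 2 * ((D *ᵥ θ) ⬝ᵥ (D *ᵥ θ)) :=
        dotProduct_self_sub_le _ _
    _ ≤ _ := by
        rw [(hP.mono fun j hj => mem_range.2 (mem_Ico.1 hj).2).dotProduct_sum_mulVec_self]
        linarith [dotProduct_mulVec_self_le_opNorm_sq D θ]

end Spectral

theorem mnls_bias_upper_bound_general {d : ℕ} (n m : ℕ) (hmn : m ≤ n) (hmd : m < d)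
    (P Phat : ℕ → Matrix (Fin d) (Fin d) ℝ) (lam : ℕ → ℝ) (θ : Fin d → ℝ)
    (hθ : θ ≠ 0)
    -- spectral decomposition of the population covariance Σ :
    (hPsymm : ∀ j < d, (P j)ᵀ = P j)
    (hPidem : ∀ j < d, P j * P j = P j)
    (hPorth : ∀ i < d, ∀ j < d, i ≠ j → P i * P j = 0)
    (hPsum : ∑ j ∈ range d, P j = 1)
    (hlam_mono : ∀ i j, i ≤ j → j < d → lam j ≤ lam i)
    (hlam_nonneg : ∀ j < d, 0 ≤ lam j)
    -- eigen-projectors of the sample covariance, with Σ̂†Σ̂ = Σ_{j≤n} P̂ⱼ :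
    (hPhsymm : ∀ j < n, (Phat j)ᵀ = Phat j)
    (hPhidem : ∀ j < n, Phat j * Phat j = Phat j)
    (hPhorth : ∀ i < n, ∀ j < n, i ≠ j → Phat i * Phat j = 0) :
    θ ⬝ᵥ (((1 - ∑ j ∈ range n, Phat j)
            * (∑ j ∈ range d, lam j • P j)
            * (1 - ∑ j ∈ range n, Phat j)).mulVec θ)
      ≤ 2 * (∑ i, θ i ^ 2)
        * (lam m + opNorm (∑ j ∈ range m, Real.sqrt (lam j) • (Phat j - P j)) ^ 2)
        * (opNorm (∑ j ∈ range m, (Phat j - P j)) ^ 2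
            + (∑ j ∈ Ico m d, ∑ i, ((P j).mulVec θ) i ^ 2) / (∑ i, θ i ^ 2)) := by
  have hP := isOrthogonalProjectorFamily_range hPsymm hPidem hPorth
  have hPhat := isOrthogonalProjectorFamily_range hPhsymm hPhidem hPhorth
  have hmn' : range m ⊆ range n := range_subset_range.2 hmn
  set Q := 1 - ∑ j ∈ range n, Phat j
  set A := ∑ j ∈ range m, √(lam j) • (Phat j - P j)
  have hQ : Qᵀ = Q := by rw [transpose_sub, transpose_one, hPhat.transpose_sum]
  have hQQ : IsIdempotentElem Q := hPhat.isIdempotentElem_sum.one_sub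
  have hQPhat (j) (hj : j ∈ range m) : Q * Phat j = 0 := by
    rw [sub_mul, one_mul, hPhat.sum_mul_of_mem (hmn' hj), sub_self]
  have hPhatQ (j) (hj : j ∈ range m) : Phat j *ᵥ (Q *ᵥ θ) = 0 := by
    rw [mulVec_mulVec, mul_sub, mul_one, hPhat.mul_sum_of_mem (hmn' hj), sub_self, zero_mulVec]
  have hA := dotProduct_mulVec_self_le_opNorm_sq A (Q *ᵥ θ)
  rw [sum_smul_sub_mulVec_eq_neg _ hPhatQ, neg_dotProduct, dotProduct_neg, neg_neg] at hA
  have hθθ : 0 < θ ⬝ᵥ θ := (dotProduct_self_nonneg θ).lt_of_ne' (dotProduct_self_eq_zero.not.2 hθ)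
  calc θ ⬝ᵥ ((Q * (∑ j ∈ range d, lam j • P j) * Q) *ᵥ θ)
      = (Q *ᵥ θ) ⬝ᵥ ((∑ j ∈ range d, lam j • P j) *ᵥ (Q *ᵥ θ)) := by
        rw [← mulVec_mulVec, ← mulVec_mulVec, ← dotProduct_transpose_mulVec, hQ, dotProduct_comm]
    _ ≤ (lam m + opNorm A ^ 2) * ((Q *ᵥ θ) ⬝ᵥ (Q *ᵥ θ)) := by
        have := dotProduct_sum_smul_mulVec_le_of_antitone hP hmd hlam_mono hlam_nonneg (Q *ᵥ θ)
        linarith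
    _ ≤ (lam m + opNorm A ^ 2) * (2 * (opNorm (∑ j ∈ range m, (Phat j - P j)) ^ 2 * (θ ⬝ᵥ θ))
          + 2 * ∑ j ∈ Ico m d, (P j *ᵥ θ) ⬝ᵥ (P j *ᵥ θ)) := by
        have := hlam_nonneg m hmd
        gcongr
        exact dotProduct_proj_mulVec_self_le_of_mul_eq_zero hQ hQQ hQPhat hP hPsum hmd.le θ
    _ = _ := by
        simp only [sum_sq_eq_dotProduct_self]
        field_simp

/-- Upper bound on the squared bias of the MNLS estimator:
`B² = θᵀ(I − Σ̂†Σ̂)Σ(I − Σ̂†Σ̂)θ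
 ≤ 2‖θ‖² (λ_{m+1} + ‖Σ_{j≤m} √λⱼ (P̂ⱼ − Pⱼ)‖²)
      (‖Σ_{j≤m} (P̂ⱼ − Pⱼ)‖² + Σ_{j>m} ‖Pⱼθ‖²/‖θ‖²)`. -/
theorem mnls_bias_upper_bound {d : ℕ} (n m : ℕ) (hmn : m ≤ n) (hmd : m < d)
    (P Phat : ℕ → Matrix (Fin d) (Fin d) ℝ) (lam : ℕ → ℝ) (θ : Fin d → ℝ)
    (hθ : θ ≠ 0)
    -- spectral decomposition of the population covariance Σ :
    (hPsymm : ∀ j < d, (P j)ᵀ = P j)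
    (hPidem : ∀ j < d, P j * P j = P j)
    (hPorth : ∀ i < d, ∀ j < d, i ≠ j → P i * P j = 0)
    (hPsum : ∑ j ∈ range d, P j = 1)
    (hPrank : ∀ j < d, (P j).trace = 1)
    (hlam_mono : ∀ i j, i ≤ j → j < d → lam j ≤ lam i)
    (hlam_nonneg : ∀ j < d, 0 ≤ lam j)
    -- eigen-projectors of the sample covariance, with Σ̂†Σ̂ = Σ_{j≤n} P̂ⱼ :
    (hPhsymm : ∀ j < n, (Phat j)ᵀ = Phat j)
    (hPhidem : ∀ j < n, Phat j * Phat j = Phat j)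
    (hPhorth : ∀ i < n, ∀ j < n, i ≠ j → Phat i * Phat j = 0) :
    θ ⬝ᵥ (((1 - ∑ j ∈ range n, Phat j)
            * (∑ j ∈ range d, lam j • P j)
            * (1 - ∑ j ∈ range n, Phat j)).mulVec θ)
      ≤ 2 * (∑ i, θ i ^ 2)
        * (lam m + opNorm (∑ j ∈ range m, Real.sqrt (lam j) • (Phat j - P j)) ^ 2)
        * (opNorm (∑ j ∈ range m, (Phat j - P j)) ^ 2
            + (∑ j ∈ Ico m d, ∑ i, ((P j).mulVec θ) i ^ 2) / (∑ i, θ i ^ 2)) :=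
  mnls_bias_upper_bound_general n m hmn hmd P Phat lam θ hθ hPsymm hPidem hPorth hPsum hlam_mono
    hlam_nonneg hPhsymm hPhidem hPhorth
end

section
/- (Eigenprojector perturbation bound) Let Σ = Σ_{j=1}^d λⱼ Pⱼ and Σ̃ = Σ_{j=1}^d λ̃ⱼ P̃ⱼ be spectral decompositions of two d × d real symmetric matrices with eigenvalues in decreasing order and rank-one projectors onto eigenvectors; assume the eigenvalues of Σ near index j are simple. Define the spectral gaps g_j = λⱼ − λ_{j+1}, ḡ₁ = g₁, and ḡⱼ = min(g_{j−1}, gⱼ) for j ≥ 2. Then ‖P̃ⱼ − Pⱼ‖ ≤ 4 ‖Σ̃ − Σ‖ / ḡⱼ, where ‖·‖ denotes the operator norm. -/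
/-!
Write `ε = ‖Σ̃ - Σ‖`. Weyl's inequality `|λ̃ₖ - λₖ| ≤ ε` comes from the Courant–Fischer
dimension count: the span of the eigenvectors of `Σ̃` for `λ̃₀, …, λ̃ₖ` meets the span of those of
`Σ` for `λₖ, …, λ_{d-1}` in a nonzero `v`, and the Rayleigh quotients of `v` give
`λ̃ₖ ≤ ⟪v, Σ̃ v⟫/‖v‖² ≤ ⟪v, Σ v⟫/‖v‖² + ε ≤ λₖ + ε`.

If `ḡⱼ ≤ 2ε` the bound is trivial, as `‖P̃ⱼ - Pⱼ‖ ≤ 2`. Otherwise `λ̃ⱼ` stays at distance at least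
`ḡⱼ - ε ≥ ḡⱼ / 2` from every `λₖ` with `k ≠ j`, so the reduced resolvent
`R = ∑_{k ≠ j} (λ̃ⱼ - λₖ)⁻¹ Pₖ` has norm at most `1 / (ḡⱼ - ε)`, and
`(1 - Pⱼ) P̃ⱼ = R (λ̃ⱼ - Σ) P̃ⱼ = R (Σ̃ - Σ) P̃ⱼ`. With the same bound for `(1 - P̃ⱼ) Pⱼ` and
`P̃ⱼ - Pⱼ = (1 - Pⱼ) P̃ⱼ - ((1 - P̃ⱼ) Pⱼ)*` this gives `‖P̃ⱼ - Pⱼ‖ ≤ 2ε / (ḡⱼ - ε) ≤ 4ε / ḡⱼ`.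
-/

open Matrix Finset

open Module

theorem IsStarProjection.norm_sub_le_norm_one_sub_mul_add {A : Type*} [NormedRing A]
    [StarRing A] [CStarRing A] {p q : A} (hp : IsStarProjection p) (hq : IsStarProjection q) :
    ‖q - p‖ ≤ ‖(1 - p) * q‖ + ‖(1 - q) * p‖ := by
  have h : q - p = (1 - p) * q - star ((1 - q) * p) := by
    rw [star_mul, hp.isSelfAdjoint.star_eq, star_sub, star_one, hq.isSelfAdjoint.star_eq]
    noncomm_ring
  rw [h, ← norm_star ((1 - q) * p)]
  exact norm_sub_le _ _

theorem IsStarProjection.inner_apply_eq_norm_sq {E : Type*} [NormedAddCommGroup E]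
    [InnerProductSpace ℝ E] [CompleteSpace E] {p : E →L[ℝ] E} (hp : IsStarProjection p) (x : E) :
    inner ℝ x (p x) = ‖p x‖ ^ 2 :=
  calc inner ℝ x (p x) = inner ℝ x ((p * p) x) := by rw [hp.isIdempotentElem.eq]
    _ = inner ℝ (p x) (p x) := (hp.isSelfAdjoint.isSymmetric x (p x)).symm
    _ = ‖p x‖ ^ 2 := real_inner_self_eq_norm_sq _

theorem Submodule.exists_mem_inf_ne_zero_of_finrank_lt {K V : Type*} [DivisionRing K]
    [AddCommGroup V] [Module K V] [FiniteDimensional K V] {U W : Submodule K V}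
    (h : finrank K V < finrank K U + finrank K W) : ∃ v ∈ U ⊓ W, v ≠ 0 := by
  by_contra! hUW
  exact h.not_ge (finrank_add_finrank_le_of_disjoint
    (disjoint_def.mpr fun v hU hW => hUW v (mem_inf.mpr ⟨hU, hW⟩)))

structure IsOrthogonalProjFamily {R ι : Type*} [Mul R] [Star R] [Zero R] (s : Finset ι)
    (p : ι → R) : Prop where
  isStarProjection : ∀ k ∈ s, IsStarProjection (p k)
  pairwise_mul_eq_zero : (s : Set ι).Pairwise fun i k => p i * p k = 0

namespace IsOrthogonalProjFamily

variable {R ι : Type*}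

section Semiring

variable [Semiring R] [StarRing R] {s t : Finset ι} {p : ι → R} {k : ι}

theorem mono (hp : IsOrthogonalProjFamily s p) (hts : t ⊆ s) : IsOrthogonalProjFamily t p :=
  ⟨fun k hk => hp.isStarProjection k (hts hk), hp.pairwise_mul_eq_zero.mono (coe_subset.mpr hts)⟩

theorem map {S F : Type*} [Semiring S] [StarRing S] [FunLike F R S] [StarHomClass F R S]
    [NonUnitalRingHomClass F R S] (hp : IsOrthogonalProjFamily s p) (f : F) :
    IsOrthogonalProjFamily s fun k => f (p k) :=
  ⟨fun k hk => (hp.isStarProjection k hk).map f,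
    fun i hi k hk hik => by simp only [← map_mul, hp.pairwise_mul_eq_zero hi hk hik, map_zero]⟩

theorem mul_sum_eq_zero (hp : IsOrthogonalProjFamily s p) (hts : t ⊆ s) (hk : k ∈ s)
    (hkt : k ∉ t) : p k * ∑ i ∈ t, p i = 0 := by
  rw [mul_sum]
  exact sum_eq_zero fun i hi =>
    hp.pairwise_mul_eq_zero hk (hts hi) (ne_of_mem_of_not_mem hi hkt).symm

theorem isStarProjection_sum (hp : IsOrthogonalProjFamily s p) :
    IsStarProjection (∑ i ∈ s, p i) := by
  classical
  induction s using Finset.induction_on with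
  | empty => simp
  | insert a s ha ih =>
    rw [sum_insert ha]
    exact (hp.isStarProjection a (mem_insert_self a s)).add (ih (hp.mono (subset_insert a s)))
      (hp.mul_sum_eq_zero (subset_insert a s) (mem_insert_self a s) ha)

variable {𝕜 : Type*} [CommSemiring 𝕜] [Algebra 𝕜 R]

theorem mul_sum_smul (hp : IsOrthogonalProjFamily s p) (hk : k ∈ s) (c : ι → 𝕜) :
    p k * ∑ i ∈ s, c i • p i = c k • p k := by
  rw [mul_sum, sum_eq_single k, mul_smul_comm, (hp.isStarProjection k hk).isIdempotentElem.eq]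
  · intro i hi hik
    rw [mul_smul_comm, hp.pairwise_mul_eq_zero hk hi hik.symm, smul_zero]
  · exact fun h => absurd hk h

theorem sum_smul_mul (hp : IsOrthogonalProjFamily s p) (hk : k ∈ s) (c : ι → 𝕜) :
    (∑ i ∈ s, c i • p i) * p k = c k • p k := by
  rw [sum_mul, sum_eq_single k, smul_mul_assoc, (hp.isStarProjection k hk).isIdempotentElem.eq]
  · intro i hi hik
    rw [smul_mul_assoc, hp.pairwise_mul_eq_zero hi hk hik, smul_zero]
  · exact fun h => absurd hk h

theorem sum_mul_of_mem (hp : IsOrthogonalProjFamily s p) (hk : k ∈ s) :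
    (∑ i ∈ s, p i) * p k = p k := by
  simpa using hp.sum_smul_mul hk fun _ => (1 : ℕ)

end Semiring

section InnerProductSpace

variable {E : Type*} [NormedAddCommGroup E] [InnerProductSpace ℝ E] [CompleteSpace E]
  {s t : Finset ι} {p : ι → E →L[ℝ] E}

theorem inner_sum_smul_apply_self (hp : IsOrthogonalProjFamily s p) (c : ι → ℝ) (x : E) :
    inner ℝ x ((∑ i ∈ s, c i • p i) x) = ∑ i ∈ s, c i * ‖p i x‖ ^ 2 := by
  simp only [_root_.sum_apply, _root_.smul_apply, inner_sum, real_inner_smul_right]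
  exact sum_congr rfl fun i hi => by rw [(hp.isStarProjection i hi).inner_apply_eq_norm_sq]

theorem inner_sum_apply_self (hp : IsOrthogonalProjFamily s p) (x : E) :
    inner ℝ x ((∑ i ∈ s, p i) x) = ∑ i ∈ s, ‖p i x‖ ^ 2 := by
  simpa using hp.inner_sum_smul_apply_self (fun _ => 1) x

theorem norm_sum_smul_apply_sq (hp : IsOrthogonalProjFamily s p) (c : ι → ℝ) (x : E) :
    ‖(∑ i ∈ s, c i • p i) x‖ ^ 2 = ∑ i ∈ s, c i ^ 2 * ‖p i x‖ ^ 2 := by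
  set T := ∑ i ∈ s, c i • p i
  calc ‖T x‖ ^ 2 = ∑ i ∈ s, c i * inner ℝ x ((p i * T) x) := by
        rw [← real_inner_self_eq_norm_sq]
        nth_rw 1 [show T = ∑ i ∈ s, c i • p i from rfl]
        simp only [_root_.sum_apply, _root_.smul_apply, sum_inner, real_inner_smul_left]
        exact sum_congr rfl fun i hi =>
          congrArg (c i * ·) ((hp.isStarProjection i hi).isSelfAdjoint.isSymmetric x (T x))
    _ = ∑ i ∈ s, c i ^ 2 * ‖p i x‖ ^ 2 := sum_congr rfl fun i hi => by
        rw [hp.mul_sum_smul hi, _root_.smul_apply, real_inner_smul_right,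
          (hp.isStarProjection i hi).inner_apply_eq_norm_sq]
        ring

theorem norm_sum_smul_le (hp : IsOrthogonalProjFamily s p) {c : ι → ℝ} {M : ℝ} (hM : 0 ≤ M)
    (hc : ∀ i ∈ s, |c i| ≤ M) : ‖∑ i ∈ s, c i • p i‖ ≤ M := by
  refine ContinuousLinearMap.opNorm_le_bound _ hM fun x => ?_
  refine (pow_le_pow_iff_left₀ (norm_nonneg _) (by positivity) two_ne_zero).mp ?_
  have hP : ‖(∑ i ∈ s, p i) x‖ ≤ ‖x‖ :=
    ((∑ i ∈ s, p i).le_opNorm x).trans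
      (mul_le_of_le_one_left (norm_nonneg x) hp.isStarProjection_sum.norm_le)
  calc ‖(∑ i ∈ s, c i • p i) x‖ ^ 2 = ∑ i ∈ s, c i ^ 2 * ‖p i x‖ ^ 2 :=
        hp.norm_sum_smul_apply_sq c x
    _ ≤ ∑ i ∈ s, M ^ 2 * ‖p i x‖ ^ 2 := sum_le_sum fun i hi => by
        obtain ⟨hlo, hhi⟩ := abs_le.mp (hc i hi)
        exact mul_le_mul_of_nonneg_right (sq_le_sq' hlo hhi) (sq_nonneg _)
    _ = M ^ 2 * ‖(∑ i ∈ s, p i) x‖ ^ 2 := by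
        rw [← mul_sum, ← hp.inner_sum_apply_self, hp.isStarProjection_sum.inner_apply_eq_norm_sq]
    _ ≤ (M * ‖x‖) ^ 2 := by rw [mul_pow]; gcongr

theorem norm_sq_eq_sum_of_sum_apply_eq (hp : IsOrthogonalProjFamily s p) {v : E}
    (hv : (∑ i ∈ s, p i) v = v) : ‖v‖ ^ 2 = ∑ i ∈ s, ‖p i v‖ ^ 2 := by
  rw [← hp.inner_sum_apply_self, hv, real_inner_self_eq_norm_sq]

theorem inner_sum_smul_apply_self_eq_sum_of_sum_apply_eq (hp : IsOrthogonalProjFamily s p)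
    (hts : t ⊆ s) {v : E} (hv : (∑ i ∈ t, p i) v = v) (c : ι → ℝ) :
    inner ℝ v ((∑ i ∈ s, c i • p i) v) = ∑ i ∈ t, c i * ‖p i v‖ ^ 2 := by
  rw [hp.inner_sum_smul_apply_self, ← sum_subset hts]
  intro i hi hit
  have hpv : p i v = 0 := by
    rw [← hv]
    exact DFunLike.congr_fun (hp.mul_sum_eq_zero hts hi hit) v
  simp [hpv]

theorem mul_norm_sq_le_inner_sum_smul_apply_self (hp : IsOrthogonalProjFamily s p)
    (hts : t ⊆ s) {v : E} (hv : (∑ i ∈ t, p i) v = v) {c : ι → ℝ} {m : ℝ}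
    (hm : ∀ i ∈ t, m ≤ c i) : m * ‖v‖ ^ 2 ≤ inner ℝ v ((∑ i ∈ s, c i • p i) v) := by
  rw [hp.inner_sum_smul_apply_self_eq_sum_of_sum_apply_eq hts hv,
    (hp.mono hts).norm_sq_eq_sum_of_sum_apply_eq hv, mul_sum]
  exact sum_le_sum fun i hi => mul_le_mul_of_nonneg_right (hm i hi) (sq_nonneg _)

theorem inner_sum_smul_apply_self_le_mul_norm_sq (hp : IsOrthogonalProjFamily s p)
    (hts : t ⊆ s) {v : E} (hv : (∑ i ∈ t, p i) v = v) {c : ι → ℝ} {M : ℝ}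
    (hM : ∀ i ∈ t, c i ≤ M) : inner ℝ v ((∑ i ∈ s, c i • p i) v) ≤ M * ‖v‖ ^ 2 := by
  rw [hp.inner_sum_smul_apply_self_eq_sum_of_sum_apply_eq hts hv,
    (hp.mono hts).norm_sq_eq_sum_of_sum_apply_eq hv, mul_sum]
  exact sum_le_sum fun i hi => mul_le_mul_of_nonneg_right (hM i hi) (sq_nonneg _)

theorem inner_apply_apply_eq_zero (hp : IsOrthogonalProjFamily s p) {i k : ι} (hi : i ∈ s)
    (hk : k ∈ s) (hik : i ≠ k) (x y : E) : inner ℝ (p i x) (p k y) = 0 :=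
  calc inner ℝ (p i x) (p k y) = inner ℝ x ((p i * p k) y) :=
        (hp.isStarProjection i hi).isSelfAdjoint.isSymmetric x (p k y)
    _ = 0 := by simp [hp.pairwise_mul_eq_zero hi hk hik]

theorem card_le_finrank_range [FiniteDimensional ℝ E] (hp : IsOrthogonalProjFamily s p)
    (hp0 : ∀ i ∈ s, p i ≠ 0) : #s ≤ finrank ℝ (LinearMap.range (∑ i ∈ s, p i).toLinearMap) := by
  choose x hx using fun i : s => DFunLike.ne_iff.mp (hp0 i i.2)
  have hmem : ∀ i : s, p i (x i) ∈ LinearMap.range (∑ i ∈ s, p i).toLinearMap := fun i =>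
    LinearMap.mem_range.mpr ⟨p i (x i), DFunLike.congr_fun (hp.sum_mul_of_mem i.2) (x i)⟩
  have hli : LinearIndependent ℝ fun i : s => p i (x i) := by
    refine linearIndependent_of_ne_zero_of_inner_eq_zero (by simpa using hx) fun i k hik => ?_
    exact hp.inner_apply_apply_eq_zero i.2 k.2 (Subtype.coe_ne_coe.mpr hik) _ _
  simpa using (LinearIndependent.of_comp (Submodule.subtype _)
    (v := fun i : s => (⟨p i (x i), hmem i⟩ : LinearMap.range (∑ i ∈ s, p i).toLinearMap))
    hli).fintype_card_le_finrank

end InnerProductSpace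

end IsOrthogonalProjFamily

section Resolvent

variable {R ι 𝕜 : Type*} [Field 𝕜] [DecidableEq ι]

def reducedResolvent [AddCommMonoid R] [Module 𝕜 R] (s : Finset ι) (p : ι → R) (lam : ι → 𝕜)
    (j : ι) (z : 𝕜) : R :=
  ∑ k ∈ s.erase j, (z - lam k)⁻¹ • p k

variable [Ring R] [StarRing R] [Algebra 𝕜 R]

theorem reducedResolvent_mul_smul_one_sub {s : Finset ι} {p : ι → R} {lam : ι → 𝕜} {j : ι}
    {z : 𝕜} (hp : IsOrthogonalProjFamily s p) (hsum : ∑ k ∈ s, p k = 1) (hj : j ∈ s)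
    (hz : ∀ k ∈ s, k ≠ j → z ≠ lam k) :
    reducedResolvent s p lam j z * (z • 1 - ∑ k ∈ s, lam k • p k) = 1 - p j := by
  rw [reducedResolvent, sum_mul,
    show 1 - p j = ∑ k ∈ s.erase j, p k by rw [sum_erase_eq_sub hj, hsum]]
  refine sum_congr rfl fun k hk => ?_
  obtain ⟨hkj, hks⟩ := mem_erase.mp hk
  rw [smul_mul_assoc, mul_sub, mul_smul_comm, mul_one, hp.mul_sum_smul hks, ← sub_smul,
    smul_smul, inv_mul_cancel₀ (sub_ne_zero.mpr (hz k hks hkj)), one_smul]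

end Resolvent

section Perturbation

variable {ι E : Type*} [NormedAddCommGroup E] [InnerProductSpace ℝ E] [CompleteSpace E]

theorem norm_reducedResolvent_le [DecidableEq ι] {s : Finset ι} {p : ι → E →L[ℝ] E}
    {lam : ι → ℝ} {j : ι} {z δ : ℝ} (hp : IsOrthogonalProjFamily s p) (hδ : 0 < δ)
    (hgap : ∀ k ∈ s, k ≠ j → δ ≤ |z - lam k|) : ‖reducedResolvent s p lam j z‖ ≤ δ⁻¹ := by
  refine (hp.mono (erase_subset j s)).norm_sum_smul_le (inv_nonneg.mpr hδ.le) fun k hk => ?_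
  obtain ⟨hkj, hks⟩ := mem_erase.mp hk
  rw [abs_inv]
  exact inv_anti₀ hδ (hgap k hks hkj)

theorem norm_one_sub_mul_le [DecidableEq ι] {s : Finset ι} {p : ι → E →L[ℝ] E} {lam : ι → ℝ}
    {j : ι} {T q : E →L[ℝ] E} {c δ : ℝ} (hp : IsOrthogonalProjFamily s p)
    (hsum : ∑ k ∈ s, p k = 1) (hj : j ∈ s) (hδ : 0 < δ)
    (hgap : ∀ k ∈ s, k ≠ j → δ ≤ |c - lam k|) (hTq : T * q = c • q) (hq : ‖q‖ ≤ 1) :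
    ‖(1 - p j) * q‖ ≤ ‖T - ∑ k ∈ s, lam k • p k‖ / δ := by
  have hz : ∀ k ∈ s, k ≠ j → c ≠ lam k := fun k hk hkj hc => by
    simpa [hc] using hδ.trans_le (hgap k hk hkj)
  have hq' :
      (1 - p j) * q = reducedResolvent s p lam j c * ((T - ∑ k ∈ s, lam k • p k) * q) := by
    rw [sub_mul T, hTq, ← smul_one_mul c q, ← sub_mul, ← mul_assoc,
      reducedResolvent_mul_smul_one_sub hp hsum hj hz]
  rw [hq', div_eq_inv_mul]
  calc _ ≤ ‖reducedResolvent s p lam j c‖ * (‖T - ∑ k ∈ s, lam k • p k‖ * ‖q‖) :=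
        (norm_mul_le _ _).trans (mul_le_mul_of_nonneg_left (norm_mul_le _ _) (norm_nonneg _))
    _ ≤ δ⁻¹ * (‖T - ∑ k ∈ s, lam k • p k‖ * 1) := by
        gcongr
        exact norm_reducedResolvent_le hp hδ hgap
    _ = _ := by rw [mul_one]

theorem norm_sub_le_two_mul_div [DecidableEq ι] {s : Finset ι} {p q : ι → E →L[ℝ] E}
    {lam mu : ι → ℝ} {j : ι} {δ : ℝ} (hj : j ∈ s) (hp : IsOrthogonalProjFamily s p)
    (hp1 : ∑ k ∈ s, p k = 1) (hq : IsOrthogonalProjFamily s q) (hq1 : ∑ k ∈ s, q k = 1)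
    (hδ : 0 < δ) (hpgap : ∀ k ∈ s, k ≠ j → δ ≤ |mu j - lam k|)
    (hqgap : ∀ k ∈ s, k ≠ j → δ ≤ |lam j - mu k|) :
    ‖q j - p j‖ ≤ 2 * ‖∑ k ∈ s, mu k • q k - ∑ k ∈ s, lam k • p k‖ / δ := by
  have hpj := hp.isStarProjection j hj
  have hqj := hq.isStarProjection j hj
  have hqp := norm_one_sub_mul_le hp hp1 hj hδ hpgap (hq.sum_smul_mul hj mu) hqj.norm_le
  have hpq := norm_one_sub_mul_le hq hq1 hj hδ hqgap (hp.sum_smul_mul hj lam) hpj.norm_le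
  rw [norm_sub_rev] at hpq
  calc ‖q j - p j‖ ≤ ‖(1 - p j) * q j‖ + ‖(1 - q j) * p j‖ :=
        hpj.norm_sub_le_norm_one_sub_mul_add hqj
    _ ≤ _ := by rw [two_mul, add_div]; exact add_le_add hqp hpq

end Perturbation

section Weyl

variable {E : Type*} [NormedAddCommGroup E] [InnerProductSpace ℝ E] [CompleteSpace E]
  [FiniteDimensional ℝ E]

theorem exists_ne_zero_sum_apply_eq {ι κ : Type*} {s : Finset ι} {t : Finset κ}
    {p : ι → E →L[ℝ] E} {q : κ → E →L[ℝ] E} (hp : IsOrthogonalProjFamily s p)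
    (hp0 : ∀ i ∈ s, p i ≠ 0) (hq : IsOrthogonalProjFamily t q) (hq0 : ∀ i ∈ t, q i ≠ 0)
    (hst : finrank ℝ E < #s + #t) :
    ∃ v ≠ 0, (∑ i ∈ s, p i) v = v ∧ (∑ i ∈ t, q i) v = v := by
  obtain ⟨v, hv, hv0⟩ := Submodule.exists_mem_inf_ne_zero_of_finrank_lt
    (hst.trans_le (add_le_add (hp.card_le_finrank_range hp0) (hq.card_le_finrank_range hq0)))
  have hfix {P : E →L[ℝ] E} (hP : IsStarProjection P) {v : E}
      (hv : v ∈ LinearMap.range P.toLinearMap) : P v = v :=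
    (LinearMap.IsIdempotentElem.mem_range_iff
      (ContinuousLinearMap.IsIdempotentElem.toLinearMap hP.isIdempotentElem)).mp hv
  exact ⟨v, hv0, hfix hp.isStarProjection_sum (Submodule.mem_inf.mp hv).1,
    hfix hq.isStarProjection_sum (Submodule.mem_inf.mp hv).2⟩

variable {n : ℕ} {p q : ℕ → E →L[ℝ] E} {lam mu : ℕ → ℝ}

theorem le_add_norm_sub_of_antitoneOn (hE : finrank ℝ E ≤ n) {k : ℕ} (hk : k < n)
    (hp : IsOrthogonalProjFamily (range n) p) (hp0 : ∀ i ∈ range n, p i ≠ 0)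
    (hq : IsOrthogonalProjFamily (range n) q) (hq0 : ∀ i ∈ range n, q i ≠ 0)
    (hlam : AntitoneOn lam (Set.Iio n)) (hmu : AntitoneOn mu (Set.Iio n)) :
    mu k ≤ lam k + ‖∑ i ∈ range n, mu i • q i - ∑ i ∈ range n, lam i • p i‖ := by
  have hlow : range (k + 1) ⊆ range n := range_subset_range.mpr hk
  have hhigh : Ico k n ⊆ range n := fun i hi => mem_range.mpr (mem_Ico.mp hi).2
  obtain ⟨v, hv0, hvq, hvp⟩ := exists_ne_zero_sum_apply_eq
    (hq.mono hlow) (fun i hi => hq0 i (hlow hi)) (hp.mono hhigh) (fun i hi => hp0 i (hhigh hi))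
    (by rw [card_range, Nat.card_Ico]; omega)
  have hmu_v : mu k * ‖v‖ ^ 2 ≤ inner ℝ v ((∑ i ∈ range n, mu i • q i) v) :=
    hq.mul_norm_sq_le_inner_sum_smul_apply_self hlow hvq fun i hi =>
      have hik : i ≤ k := Nat.lt_succ_iff.mp (mem_range.mp hi)
      hmu (hik.trans_lt hk) hk hik
  have hlam_v : inner ℝ v ((∑ i ∈ range n, lam i • p i) v) ≤ lam k * ‖v‖ ^ 2 :=
    hp.inner_sum_smul_apply_self_le_mul_norm_sq hhigh hvp fun i hi =>
      hlam hk (mem_Ico.mp hi).2 (mem_Ico.mp hi).1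
  set D := ∑ i ∈ range n, mu i • q i - ∑ i ∈ range n, lam i • p i
  have hD : inner ℝ v (D v) ≤ ‖D‖ * ‖v‖ ^ 2 :=
    calc inner ℝ v (D v) ≤ ‖v‖ * ‖D v‖ := real_inner_le_norm v (D v)
      _ ≤ ‖v‖ * (‖D‖ * ‖v‖) := by gcongr; exact D.le_opNorm v
      _ = ‖D‖ * ‖v‖ ^ 2 := by ring
  rw [_root_.sub_apply, inner_sub_right] at hD
  exact le_of_mul_le_mul_right (by linarith : mu k * ‖v‖ ^ 2 ≤ (lam k + ‖D‖) * ‖v‖ ^ 2)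
    (by positivity)

theorem abs_sub_le_norm_sub_of_antitoneOn (hE : finrank ℝ E ≤ n) {k : ℕ} (hk : k < n)
    (hp : IsOrthogonalProjFamily (range n) p) (hp0 : ∀ i ∈ range n, p i ≠ 0)
    (hq : IsOrthogonalProjFamily (range n) q) (hq0 : ∀ i ∈ range n, q i ≠ 0)
    (hlam : AntitoneOn lam (Set.Iio n)) (hmu : AntitoneOn mu (Set.Iio n)) :
    |mu k - lam k| ≤ ‖∑ i ∈ range n, mu i • q i - ∑ i ∈ range n, lam i • p i‖ := by
  have hle := le_add_norm_sub_of_antitoneOn hE hk hp hp0 hq hq0 hlam hmu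
  have hge := le_add_norm_sub_of_antitoneOn hE hk hq hq0 hp hp0 hmu hlam
  rw [norm_sub_rev] at hge
  exact abs_sub_le_iff.mpr ⟨by linarith, by linarith⟩

theorem norm_sub_le_four_mul_div_of_antitoneOn (hE : finrank ℝ E ≤ n) {j : ℕ} (hj : j < n)
    (hp : IsOrthogonalProjFamily (range n) p) (hp0 : ∀ i ∈ range n, p i ≠ 0)
    (hp1 : ∑ i ∈ range n, p i = 1)
    (hq : IsOrthogonalProjFamily (range n) q) (hq0 : ∀ i ∈ range n, q i ≠ 0)
    (hq1 : ∑ i ∈ range n, q i = 1)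
    (hlam : AntitoneOn lam (Set.Iio n)) (hmu : AntitoneOn mu (Set.Iio n)) {g : ℝ} (hg : 0 < g)
    (hgap : ∀ k ∈ range n, k ≠ j → g ≤ |lam j - lam k|) :
    ‖q j - p j‖ ≤ 4 * ‖∑ i ∈ range n, mu i • q i - ∑ i ∈ range n, lam i • p i‖ / g := by
  set ε := ‖∑ i ∈ range n, mu i • q i - ∑ i ∈ range n, lam i • p i‖
  have hε : 0 ≤ ε := norm_nonneg _
  have hweyl : ∀ k ∈ range n, |mu k - lam k| ≤ ε := fun k hk =>
    abs_sub_le_norm_sub_of_antitoneOn hE (mem_range.mp hk) hp hp0 hq hq0 hlam hmu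
  have hjn := mem_range.mpr hj
  rcases le_or_gt g (2 * ε) with hsmall | hlarge
  · calc ‖q j - p j‖ ≤ ‖q j‖ + ‖p j‖ := norm_sub_le _ _
      _ ≤ 1 + 1 :=
        add_le_add (hq.isStarProjection j hjn).norm_le (hp.isStarProjection j hjn).norm_le
      _ ≤ 4 * ε / g := by rw [le_div_iff₀ hg]; linarith
  · have hδ : 0 < g - ε := by linarith
    calc ‖q j - p j‖ ≤ 2 * ε / (g - ε) := by
          refine norm_sub_le_two_mul_div hjn hp hp1 hq hq1 hδ (fun k hk hkj => ?_)
            fun k hk hkj => ?_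
          · linarith [hgap k hk hkj, hweyl j hjn, abs_sub_le (lam j) (mu j) (lam k),
              abs_sub_comm (lam j) (mu j)]
          · linarith [hgap k hk hkj, hweyl k hk, abs_sub_le (lam j) (mu k) (lam k)]
      _ ≤ 4 * ε / g := by
          rw [div_le_div_iff₀ hδ hg]
          nlinarith

end Weyl

def adjacentGap (lam : ℕ → ℝ) (j : ℕ) : ℝ :=
  if j = 0 then lam 0 - lam 1 else min (lam (j - 1) - lam j) (lam j - lam (j + 1))

theorem adjacentGap_le_abs_sub {lam : ℕ → ℝ} {n j k : ℕ} (hlam : AntitoneOn lam (Set.Iio n))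
    (hj : j < n) (hk : k < n) (hkj : k ≠ j) : adjacentGap lam j ≤ |lam j - lam k| := by
  rcases hkj.lt_or_gt with hlt | hgt
  · have hj0 : j ≠ 0 := by omega
    have hmono : lam (j - 1) ≤ lam k := hlam hk (Set.mem_Iio.mpr (by omega)) (by omega)
    calc adjacentGap lam j ≤ lam (j - 1) - lam j := by
          rw [adjacentGap, if_neg hj0]; exact min_le_left _ _
      _ ≤ lam k - lam j := by linarith
      _ ≤ |lam j - lam k| := by rw [abs_sub_comm]; exact le_abs_self _
  · have hmono : lam k ≤ lam (j + 1) := hlam (Set.mem_Iio.mpr (by omega)) hk (by omega)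
    have hgap : adjacentGap lam j ≤ lam j - lam (j + 1) := by
      unfold adjacentGap
      split_ifs with hj0
      · subst hj0; rfl
      · exact min_le_right _ _
    linarith [le_abs_self (lam j - lam k)]

theorem Matrix.isOrthogonalProjFamily_range {m : Type*} [Fintype m] {n : ℕ}
    {P : ℕ → Matrix m m ℝ} (hsymm : ∀ k < n, (P k)ᵀ = P k) (hidem : ∀ k < n, P k * P k = P k)
    (horth : ∀ i < n, ∀ k < n, i ≠ k → P i * P k = 0) : IsOrthogonalProjFamily (range n) P where
  isStarProjection k hk := ⟨hidem k (mem_range.mp hk), by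
    rw [IsSelfAdjoint, star_eq_conjTranspose, conjTranspose_eq_transpose_of_trivial,
      hsymm k (mem_range.mp hk)]⟩
  pairwise_mul_eq_zero i hi k hk hik := horth i (mem_range.mp hi) k (mem_range.mp hk) hik

theorem Matrix.toEuclideanCLM_ne_zero_of_trace_eq_one {m : Type*} [Fintype m] [DecidableEq m]
    {A : Matrix m m ℝ} (hA : A.trace = 1) : Matrix.toEuclideanCLM (𝕜 := ℝ) A ≠ 0 := by
  rw [EmbeddingLike.map_ne_zero_iff]
  rintro rfl
  simp at hA

theorem eigenprojector_perturbation_general {d : ℕ} (j : ℕ) (hj : j < d)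
    (Sig SigT : Matrix (Fin d) (Fin d) ℝ)
    (P PT : ℕ → Matrix (Fin d) (Fin d) ℝ) (lam lamT : ℕ → ℝ)
    -- spectral decomposition of Σ with simple (rank-one) eigenprojectors,
    -- eigenvalues in decreasing order:
    (hPsymm : ∀ k < d, (P k)ᵀ = P k)
    (hPidem : ∀ k < d, P k * P k = P k)
    (hPorth : ∀ i < d, ∀ k < d, i ≠ k → P i * P k = 0)
    (hPsum : ∑ k ∈ range d, P k = 1)
    (hPrank : ∀ k < d, (P k).trace = 1)
    (hlam_mono : ∀ i k, i ≤ k → k < d → lam k ≤ lam i)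
    (hSig : Sig = ∑ k ∈ range d, lam k • P k)
    -- same for Σ̃ :
    (hPTsymm : ∀ k < d, (PT k)ᵀ = PT k)
    (hPTidem : ∀ k < d, PT k * PT k = PT k)
    (hPTorth : ∀ i < d, ∀ k < d, i ≠ k → PT i * PT k = 0)
    (hPTsum : ∑ k ∈ range d, PT k = 1)
    (hPTrank : ∀ k < d, (PT k).trace = 1)
    (hlamT_mono : ∀ i k, i ≤ k → k < d → lamT k ≤ lamT i)
    (hSigT : SigT = ∑ k ∈ range d, lamT k • PT k)
    -- the relevant spectral gap is positive:
    (hgap : 0 < (if j = 0 then lam 0 - lam 1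
                 else min (lam (j - 1) - lam j) (lam j - lam (j + 1)))) :
    opNorm (PT j - P j)
      ≤ 4 * opNorm (SigT - Sig)
          / (if j = 0 then lam 0 - lam 1
             else min (lam (j - 1) - lam j) (lam j - lam (j + 1))) := by
  let T := Matrix.toEuclideanCLM (𝕜 := ℝ) (n := Fin d)
  have hlam : AntitoneOn lam (Set.Iio d) := fun i _ k hk hik => hlam_mono i k hik hk
  have hlamT : AntitoneOn lamT (Set.Iio d) := fun i _ k hk hik => hlamT_mono i k hik hk
  have key := norm_sub_le_four_mul_div_of_antitoneOn (g := adjacentGap lam j)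
    finrank_euclideanSpace_fin.le hj
    ((isOrthogonalProjFamily_range hPsymm hPidem hPorth).map T)
    (fun k hk => toEuclideanCLM_ne_zero_of_trace_eq_one (hPrank k (mem_range.mp hk)))
    (by rw [← map_sum, hPsum, map_one])
    ((isOrthogonalProjFamily_range hPTsymm hPTidem hPTorth).map T)
    (fun k hk => toEuclideanCLM_ne_zero_of_trace_eq_one (hPTrank k (mem_range.mp hk)))
    (by rw [← map_sum, hPTsum, map_one]) hlam hlamT hgap
    (fun k hk hkj => adjacentGap_le_abs_sub hlam hj (mem_range.mp hk) hkj)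
  -- `opNorm A` unfolds to `‖toEuclideanCLM A‖`
  show ‖T (PT j - P j)‖ ≤ 4 * ‖T (SigT - Sig)‖ / adjacentGap lam j
  simpa only [map_sub, hSig, hSigT, map_sum, map_smul] using key

/-- Eigenprojector perturbation bound (Koltchinskii–Lounici):
`‖P̃ⱼ − Pⱼ‖ ≤ 4 ‖Σ̃ − Σ‖ / ḡⱼ` where `ḡⱼ` is the minimum of the spectral gaps
adjacent to the `j`-th eigenvalue.  (0-based indexing: `g j = λ j − λ (j+1)`,
`ḡ 0 = g 0`, `ḡ j = min (g (j-1)) (g j)` for `j ≥ 1`; eigenvalues beyond `d`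
are set to `0`.) -/
theorem eigenprojector_perturbation {d : ℕ} (j : ℕ) (hj : j < d)
    (Sig SigT : Matrix (Fin d) (Fin d) ℝ)
    (P PT : ℕ → Matrix (Fin d) (Fin d) ℝ) (lam lamT : ℕ → ℝ)
    -- spectral decomposition of Σ with simple (rank-one) eigenprojectors,
    -- eigenvalues in decreasing order:
    (hPsymm : ∀ k < d, (P k)ᵀ = P k)
    (hPidem : ∀ k < d, P k * P k = P k)
    (hPorth : ∀ i < d, ∀ k < d, i ≠ k → P i * P k = 0)
    (hPsum : ∑ k ∈ range d, P k = 1)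
    (hPrank : ∀ k < d, (P k).trace = 1)
    (hlam_mono : ∀ i k, i ≤ k → k < d → lam k ≤ lam i)
    (hlam_zero : ∀ k, d ≤ k → lam k = 0)
    (hSig : Sig = ∑ k ∈ range d, lam k • P k)
    -- same for Σ̃ :
    (hPTsymm : ∀ k < d, (PT k)ᵀ = PT k)
    (hPTidem : ∀ k < d, PT k * PT k = PT k)
    (hPTorth : ∀ i < d, ∀ k < d, i ≠ k → PT i * PT k = 0)
    (hPTsum : ∑ k ∈ range d, PT k = 1)
    (hPTrank : ∀ k < d, (PT k).trace = 1)
    (hlamT_mono : ∀ i k, i ≤ k → k < d → lamT k ≤ lamT i)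
    (hSigT : SigT = ∑ k ∈ range d, lamT k • PT k)
    -- the relevant spectral gap is positive:
    (hgap : 0 < (if j = 0 then lam 0 - lam 1
                 else min (lam (j - 1) - lam j) (lam j - lam (j + 1)))) :
    opNorm (PT j - P j)
      ≤ 4 * opNorm (SigT - Sig)
          / (if j = 0 then lam 0 - lam 1
             else min (lam (j - 1) - lam j) (lam j - lam (j + 1))) :=
  eigenprojector_perturbation_general j hj Sig SigT P PT lam lamT hPsymm hPidem hPorth hPsum hPrank
    hlam_mono hSig hPTsymm hPTidem hPTorth hPTsum hPTrank hlamT_mono hSigT hgap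
end

section
/- Let Z be an n × d real matrix, Λ = diag(λ₁,…,λ_d) with λ₁ ≥ … ≥ λ_d > 0, U orthogonal, Σ = UΛUᵀ, and Σ̂ = n⁻¹UΛ^{1/2}ZᵀZΛ^{1/2}Uᵀ. Partition coordinates into S = {1,…,m} and its complement; let Z_S, Z_⊥ be the corresponding column blocks of Z. Then ‖Σ̂ − Σ‖ ≤ λ₁‖n⁻¹Z_SᵀZ_S − I‖ + 2√(λ₁λ_{m+1}) σ_max(Z_S/√n) σ_max(Z_⊥/√n) + λ_{m+1} σ_max(Z_⊥/√n)² + λ_{m+1}, where ‖·‖ is the operator norm. -/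
/-!
Writing `Λ^{1/2} = diagonal (√λ)`, one has `Σ̂ - Σ = U Λ^{1/2} (n⁻¹ ZᵀZ - I) Λ^{1/2} Uᵀ`, and
conjugating by the isometry `U` does not increase the operator norm. Splitting the coordinates
into `S` and its complement, the middle matrix is the sum of its four blocks
`Λ_S^{1/2} (n⁻¹ Z_SᵀZ_S - I) Λ_S^{1/2}`, `Λ_S^{1/2} (n⁻¹ Z_SᵀZ_⊥) Λ_⊥^{1/2}`, its transpose, and
`Λ_⊥^{1/2} (n⁻¹ Z_⊥ᵀZ_⊥ - I) Λ_⊥^{1/2}`; each is bounded by submultiplicativity and the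
triangle inequality, with `‖Λ_S^{1/2}‖ ≤ √λ₁` and `‖Λ_⊥^{1/2}‖ ≤ √λ_{m+1}` by monotonicity of
the eigenvalues.
-/

open Matrix Finset

/-- The block of the first `m` columns of `Z`. -/
def colBlockLeft {n d : ℕ} (m : ℕ) (hm : m ≤ d) (Z : Matrix (Fin n) (Fin d) ℝ) :
    Matrix (Fin n) (Fin m) ℝ :=
  Matrix.of fun i j => Z i ⟨j, lt_of_lt_of_le j.2 hm⟩

/-- The block of the remaining `d - m` columns of `Z`. -/
def colBlockRight {n d : ℕ} (m : ℕ) (hm : m ≤ d) (Z : Matrix (Fin n) (Fin d) ℝ) :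
    Matrix (Fin n) (Fin (d - m)) ℝ :=
  Matrix.of fun i j => Z i ⟨m + j, by have := j.isLt; omega⟩

open scoped Matrix.Norms.L2Operator

namespace Matrix

variable {𝕜 : Type*} [RCLike 𝕜] {ι κ κ' μ ρ : Type*}

lemma l2_opNorm_one_le [Fintype ι] [DecidableEq ι] : ‖(1 : Matrix ι ι 𝕜)‖ ≤ 1 := by
  rw [← diagonal_one, l2_opNorm_diagonal]
  exact (pi_norm_le_iff_of_nonneg zero_le_one).2 fun _ => norm_one.le

lemma l2_opNorm_le_one_of_conjTranspose_mul_self [Fintype ι] [Fintype κ] [DecidableEq κ]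
    {P : Matrix ι κ 𝕜} (hP : Pᴴ * P = 1) : ‖P‖ ≤ 1 := by
  have h := l2_opNorm_conjTranspose_mul_self P
  rw [hP] at h
  nlinarith [l2_opNorm_one_le (ι := κ) (𝕜 := 𝕜), norm_nonneg P]

lemma l2_opNorm_mul_mul_le_of_le [Fintype ι] [Fintype κ] [Fintype κ'] [Fintype μ]
    [DecidableEq κ] [DecidableEq κ'] [DecidableEq μ] {A : Matrix ι κ 𝕜} {X : Matrix κ κ' 𝕜}
    {B : Matrix κ' μ 𝕜} {a x b : ℝ} (hA : ‖A‖ ≤ a) (hX : ‖X‖ ≤ x) (hB : ‖B‖ ≤ b) :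
    ‖A * X * B‖ ≤ a * x * b := by
  have ha : 0 ≤ a := (norm_nonneg _).trans hA
  have hx : 0 ≤ x := (norm_nonneg _).trans hX
  calc ‖A * X * B‖ ≤ ‖A‖ * ‖X‖ * ‖B‖ :=
        (l2_opNorm_mul _ _).trans (by gcongr; exact l2_opNorm_mul _ _)
    _ ≤ a * x * b := by gcongr

lemma l2_opNorm_mul_mul_conjTranspose_le [Fintype ι] [Fintype κ] [Fintype κ'] [DecidableEq ι]
    [DecidableEq κ] [DecidableEq κ'] {P : Matrix ι κ 𝕜} {Q : Matrix ι κ' 𝕜} (hP : Pᴴ * P = 1)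
    (hQ : Qᴴ * Q = 1) (X : Matrix κ κ' 𝕜) : ‖P * X * Qᴴ‖ ≤ ‖X‖ := by
  have hQ' : ‖Qᴴ‖ ≤ 1 :=
    (l2_opNorm_conjTranspose Q).trans_le (l2_opNorm_le_one_of_conjTranspose_mul_self hQ)
  simpa using l2_opNorm_mul_mul_le_of_le (l2_opNorm_le_one_of_conjTranspose_mul_self hP) le_rfl hQ'

lemma submatrix_eq_conjTranspose_mul_mul [Fintype ι] [DecidableEq ι] (M : Matrix ι ι 𝕜)
    (e : κ → ι) (f : κ' → ι) :
    M.submatrix e f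
      = ((1 : Matrix ι ι 𝕜).submatrix id e)ᴴ * M * (1 : Matrix ι ι 𝕜).submatrix id f := by
  rw [conjTranspose_submatrix, conjTranspose_one]
  ext
  simp [mul_apply, one_apply]

lemma conjTranspose_mul_self_submatrix_one [Fintype ι] [DecidableEq ι] [DecidableEq κ]
    {e : κ → ι} (he : Function.Injective e) :
    ((1 : Matrix ι ι 𝕜).submatrix id e)ᴴ * (1 : Matrix ι ι 𝕜).submatrix id e = 1 := by
  rw [conjTranspose_submatrix, conjTranspose_one, ← submatrix_mul _ _ _ id _ Function.bijective_id,
    Matrix.mul_one, submatrix_one _ he]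

lemma submatrix_one_mul_conjTranspose_add [Fintype ι] [Fintype κ] [Fintype κ'] [DecidableEq ι]
    (σ : κ ⊕ κ' ≃ ι) :
    (1 : Matrix ι ι 𝕜).submatrix id (σ ∘ Sum.inl)
        * ((1 : Matrix ι ι 𝕜).submatrix id (σ ∘ Sum.inl))ᴴ
      + (1 : Matrix ι ι 𝕜).submatrix id (σ ∘ Sum.inr)
        * ((1 : Matrix ι ι 𝕜).submatrix id (σ ∘ Sum.inr))ᴴ = 1 := by
  have hcols : (1 : Matrix ι ι 𝕜).submatrix id σ = fromCols
      ((1 : Matrix ι ι 𝕜).submatrix id (σ ∘ Sum.inl))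
      ((1 : Matrix ι ι 𝕜).submatrix id (σ ∘ Sum.inr)) := by
    ext i (k | k) <;> rfl
  rw [← fromCols_mul_fromRows, ← conjTranspose_fromCols_eq_fromRows_conjTranspose, ← hcols,
    conjTranspose_submatrix, conjTranspose_one, submatrix_mul_equiv, Matrix.mul_one,
    submatrix_id_id]

lemma l2_opNorm_le_sum_submatrix [Fintype ι] [Fintype κ] [Fintype κ'] [DecidableEq ι]
    [DecidableEq κ] [DecidableEq κ'] (σ : κ ⊕ κ' ≃ ι) (M : Matrix ι ι 𝕜) :
    ‖M‖ ≤ ‖M.submatrix (σ ∘ Sum.inl) (σ ∘ Sum.inl)‖ + ‖M.submatrix (σ ∘ Sum.inl) (σ ∘ Sum.inr)‖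
      + ‖M.submatrix (σ ∘ Sum.inr) (σ ∘ Sum.inl)‖
      + ‖M.submatrix (σ ∘ Sum.inr) (σ ∘ Sum.inr)‖ := by
  set P := (1 : Matrix ι ι 𝕜).submatrix id (σ ∘ Sum.inl)
  set Q := (1 : Matrix ι ι 𝕜).submatrix id (σ ∘ Sum.inr)
  have hP : Pᴴ * P = 1 :=
    conjTranspose_mul_self_submatrix_one (σ.injective.comp Sum.inl_injective)
  have hQ : Qᴴ * Q = 1 :=
    conjTranspose_mul_self_submatrix_one (σ.injective.comp Sum.inr_injective)
  have hM : M = P * (Pᴴ * M * P) * Pᴴ + P * (Pᴴ * M * Q) * Qᴴ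
      + Q * (Qᴴ * M * P) * Pᴴ + Q * (Qᴴ * M * Q) * Qᴴ := by
    conv_lhs => rw [← Matrix.one_mul M, ← Matrix.mul_one (1 * M),
      ← submatrix_one_mul_conjTranspose_add (𝕜 := 𝕜) σ]
    simp only [Matrix.add_mul, Matrix.mul_add, Matrix.mul_assoc]
    abel
  simp only [submatrix_eq_conjTranspose_mul_mul M]
  conv_lhs => rw [hM]
  refine norm_add₄_le.trans ?_
  gcongr <;> exact l2_opNorm_mul_mul_conjTranspose_le ‹_› ‹_› _

lemma submatrix_diagonal_mul_mul_diagonal [Fintype ι] [Fintype κ] [Fintype κ'] [DecidableEq ι]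
    [DecidableEq κ] [DecidableEq κ'] {α : Type*} [NonUnitalNonAssocSemiring α] (v : ι → α)
    (M : Matrix ι ι α) (e : κ → ι) (f : κ' → ι) :
    (diagonal v * M * diagonal v).submatrix e f
      = diagonal (v ∘ e) * M.submatrix e f * diagonal (v ∘ f) := by
  ext
  simp [diagonal_mul, mul_diagonal]

lemma submatrix_smul_transpose_mul_self_sub_one [Fintype ρ] [DecidableEq ι] {α : Type*}
    [CommRing α] (c : α) (Z : Matrix ρ ι α) (e : κ → ι) (f : κ' → ι) :
    (c • (Zᵀ * Z) - 1).submatrix e f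
      = c • ((Z.submatrix id e)ᵀ * Z.submatrix id f) - (1 : Matrix ι ι α).submatrix e f :=
  rfl

lemma smul_transpose_mul_smul [Fintype ρ] {α : Type*} [CommRing α] (t : α) (A : Matrix ρ κ α)
    (B : Matrix ρ κ' α) : (t • A)ᵀ * (t • B) = (t * t) • (Aᵀ * B) := by
  rw [transpose_smul, Matrix.smul_mul, Matrix.mul_smul, smul_smul]

lemma l2_opNorm_transpose [Fintype ι] [Fintype κ] [DecidableEq ι] [DecidableEq κ]
    (A : Matrix ι κ ℝ) : ‖Aᵀ‖ = ‖A‖ := by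
  rw [← conjTranspose_eq_transpose_of_trivial, l2_opNorm_conjTranspose]

lemma l2_opNorm_smul_transpose_mul_le [Fintype ρ] [Fintype κ] [Fintype κ'] [DecidableEq κ]
    [DecidableEq κ'] (t : ℝ) (A : Matrix ρ κ ℝ) (B : Matrix ρ κ' ℝ) :
    ‖(t * t) • (Aᵀ * B)‖ ≤ ‖t • A‖ * ‖t • B‖ := by
  classical
  rw [← smul_transpose_mul_smul, ← l2_opNorm_transpose (t • A)]
  exact l2_opNorm_mul _ _

lemma l2_opNorm_smul_transpose_mul_self_sub_one_le [Fintype ρ] [Fintype κ] [DecidableEq κ]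
    (t : ℝ) (A : Matrix ρ κ ℝ) : ‖(t * t) • (Aᵀ * A) - 1‖ ≤ ‖t • A‖ ^ 2 + 1 := by
  rw [← smul_transpose_mul_smul, ← conjTranspose_eq_transpose_of_trivial]
  refine (norm_sub_le _ _).trans ?_
  rw [l2_opNorm_conjTranspose_mul_self, sq]
  gcongr
  exact l2_opNorm_one_le

lemma l2_opNorm_diagonal_mul_gram_sub_one_mul_diagonal_le [Fintype ι] [Fintype κ] [Fintype κ']
    [Fintype ρ] [DecidableEq ι] [DecidableEq κ] [DecidableEq κ'] (σ : κ ⊕ κ' ≃ ι)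
    (Z : Matrix ρ ι ℝ) (t : ℝ) (v : ι → ℝ) {a b : ℝ} (ha : 0 ≤ a) (hb : 0 ≤ b)
    (hva : ∀ k, |v (σ (Sum.inl k))| ≤ a) (hvb : ∀ k, |v (σ (Sum.inr k))| ≤ b) :
    ‖diagonal v * ((t * t) • (Zᵀ * Z) - 1) * diagonal v‖
      ≤ a ^ 2 * ‖(t * t) • ((Z.submatrix id (σ ∘ Sum.inl))ᵀ * Z.submatrix id (σ ∘ Sum.inl)) - 1‖
        + 2 * (a * b) * ‖t • Z.submatrix id (σ ∘ Sum.inl)‖ * ‖t • Z.submatrix id (σ ∘ Sum.inr)‖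
        + b ^ 2 * (‖t • Z.submatrix id (σ ∘ Sum.inr)‖ ^ 2 + 1) := by
  set ZS := Z.submatrix id (σ ∘ Sum.inl)
  set ZB := Z.submatrix id (σ ∘ Sum.inr)
  have hDS : ‖diagonal (v ∘ σ ∘ Sum.inl)‖ ≤ a := by
    rw [l2_opNorm_diagonal]
    exact (pi_norm_le_iff_of_nonneg ha).2 hva
  have hDB : ‖diagonal (v ∘ σ ∘ Sum.inr)‖ ≤ b := by
    rw [l2_opNorm_diagonal]
    exact (pi_norm_le_iff_of_nonneg hb).2 hvb
  have hSS : (1 : Matrix ι ι ℝ).submatrix (σ ∘ Sum.inl) (σ ∘ Sum.inl) = 1 :=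
    submatrix_one _ (σ.injective.comp Sum.inl_injective)
  have hBB : (1 : Matrix ι ι ℝ).submatrix (σ ∘ Sum.inr) (σ ∘ Sum.inr) = 1 :=
    submatrix_one _ (σ.injective.comp Sum.inr_injective)
  have hSB : (1 : Matrix ι ι ℝ).submatrix (σ ∘ Sum.inl) (σ ∘ Sum.inr) = 0 := by
    ext; simp
  have hBS : (1 : Matrix ι ι ℝ).submatrix (σ ∘ Sum.inr) (σ ∘ Sum.inl) = 0 := by
    ext; simp
  refine (l2_opNorm_le_sum_submatrix σ _).trans ?_
  simp only [submatrix_diagonal_mul_mul_diagonal, submatrix_smul_transpose_mul_self_sub_one,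
    hSS, hSB, hBS, hBB, sub_zero]
  have h11 := l2_opNorm_mul_mul_le_of_le hDS (le_refl ‖(t * t) • (ZSᵀ * ZS) - 1‖) hDS
  have h12 := l2_opNorm_mul_mul_le_of_le hDS (l2_opNorm_smul_transpose_mul_le t ZS ZB) hDB
  have h21 := l2_opNorm_mul_mul_le_of_le hDB (l2_opNorm_smul_transpose_mul_le t ZB ZS) hDS
  have h22 := l2_opNorm_mul_mul_le_of_le hDB (l2_opNorm_smul_transpose_mul_self_sub_one_le t ZB) hDB
  linarith

end Matrix

def finSumFinSubEquiv {m d : ℕ} (hm : m ≤ d) : Fin m ⊕ Fin (d - m) ≃ Fin d :=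
  finSumFinEquiv.trans (finCongr (Nat.add_sub_cancel' hm))

lemma colBlockLeft_eq_submatrix {n m d : ℕ} (hm : m ≤ d) (Z : Matrix (Fin n) (Fin d) ℝ) :
    colBlockLeft m hm Z = Z.submatrix id (finSumFinSubEquiv hm ∘ Sum.inl) :=
  rfl

lemma colBlockRight_eq_submatrix {n m d : ℕ} (hm : m ≤ d) (Z : Matrix (Fin n) (Fin d) ℝ) :
    colBlockRight m hm Z = Z.submatrix id (finSumFinSubEquiv hm ∘ Sum.inr) :=
  rfl

lemma opNorm_eq_l2_opNorm {m n : Type*} [Fintype m] [Fintype n] [DecidableEq n]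
    (A : Matrix m n ℝ) : opNorm A = ‖A‖ :=
  rfl

/-- Block decomposition bound for `‖Σ̂ − Σ‖` where `Σ = UΛUᵀ` and
`Σ̂ = n⁻¹ U Λ^{1/2} Zᵀ Z Λ^{1/2} Uᵀ`:
`‖Σ̂ − Σ‖ ≤ λ₁‖n⁻¹Z_SᵀZ_S − I‖ + 2√(λ₁λ_{m+1}) σ_max(Z_S/√n) σ_max(Z_⊥/√n)
  + λ_{m+1} σ_max(Z_⊥/√n)² + λ_{m+1}`. -/
theorem sample_covariance_deviation_bound {n d : ℕ} (m : ℕ) (hm : m < d)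
    (Z : Matrix (Fin n) (Fin d) ℝ) (U : Matrix (Fin d) (Fin d) ℝ)
    (lam : Fin d → ℝ)
    (hU' : Uᵀ * U = 1)
    (hlam_mono : ∀ i j : Fin d, i ≤ j → lam j ≤ lam i)
    (hlam_pos : ∀ j, 0 < lam j) :
    opNorm ((n : ℝ)⁻¹ •
        (U * Matrix.diagonal (fun j => Real.sqrt (lam j)) * Zᵀ * Z
           * Matrix.diagonal (fun j => Real.sqrt (lam j)) * Uᵀ)
      - U * Matrix.diagonal lam * Uᵀ)
      ≤ lam ⟨0, by omega⟩
          * opNorm ((n : ℝ)⁻¹ •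
              ((colBlockLeft m hm.le Z)ᵀ * colBlockLeft m hm.le Z) - 1)
        + 2 * Real.sqrt (lam ⟨0, by omega⟩ * lam ⟨m, hm⟩)
          * opNorm ((Real.sqrt n)⁻¹ • colBlockLeft m hm.le Z)
          * opNorm ((Real.sqrt n)⁻¹ • colBlockRight m hm.le Z)
        + lam ⟨m, hm⟩ * opNorm ((Real.sqrt n)⁻¹ • colBlockRight m hm.le Z) ^ 2
        + lam ⟨m, hm⟩ := by
  set D := diagonal fun j => Real.sqrt (lam j)
  have hn : (Real.sqrt n)⁻¹ * (Real.sqrt n)⁻¹ = (n : ℝ)⁻¹ := by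
    rw [← mul_inv, Real.mul_self_sqrt n.cast_nonneg]
  have hDD : D * D = diagonal lam := by
    rw [diagonal_mul_diagonal]
    exact congrArg diagonal (funext fun j => Real.mul_self_sqrt (hlam_pos j).le)
  have hcentered (c : ℝ) : c • (U * D * Zᵀ * Z * D * Uᵀ) - U * (D * D) * Uᵀ
      = U * (D * (c • (Zᵀ * Z) - 1) * D) * Uᵀ := by
    simp only [Matrix.mul_sub, Matrix.sub_mul, Matrix.mul_smul, Matrix.smul_mul, Matrix.mul_one,
      Matrix.mul_assoc]
  have hUU : Uᴴ * U = 1 := by rwa [conjTranspose_eq_transpose_of_trivial]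
  have hsqrt_le (i j : Fin d) (hij : i ≤ j) : |Real.sqrt (lam j)| ≤ Real.sqrt (lam i) := by
    rw [abs_of_nonneg (Real.sqrt_nonneg _)]
    exact Real.sqrt_le_sqrt (hlam_mono i j hij)
  have hblocks := l2_opNorm_diagonal_mul_gram_sub_one_mul_diagonal_le (finSumFinSubEquiv hm.le)
    Z (Real.sqrt n)⁻¹ (fun j => Real.sqrt (lam j)) (Real.sqrt_nonneg _) (Real.sqrt_nonneg _)
    (fun k => hsqrt_le ⟨0, by omega⟩ _ (Fin.le_def.2 (Nat.zero_le _)))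
    (fun k => hsqrt_le ⟨m, hm⟩ (finSumFinSubEquiv hm.le (.inr k))
      (by simp [finSumFinSubEquiv, Fin.le_def]))
  rw [opNorm_eq_l2_opNorm, ← hDD, ← hn, hcentered, ← conjTranspose_eq_transpose_of_trivial U]
  refine (l2_opNorm_mul_mul_conjTranspose_le hUU hUU _).trans (hblocks.trans_eq ?_)
  rw [Real.sq_sqrt (hlam_pos _).le, Real.sq_sqrt (hlam_pos _).le,
    ← Real.sqrt_mul (hlam_pos _).le]
  simp only [opNorm_eq_l2_opNorm, colBlockLeft_eq_submatrix, colBlockRight_eq_submatrix]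
  ring
end

section
/- Let Σ̂ = Σ_{j=1}^n λ̂ⱼP̂ⱼ and Σ = Σ_{k=1}^d λₖPₖ be spectral decompositions with rank-one orthogonal projectors, λ̂ₙ > 0, λₖ ≥ 0. Then Tr(Σ_{j=m+1}^n Σ_{k=1}^m (λₖ/λ̂ⱼ) P̂ⱼPₖ) ≤ (2m/λ̂ₙ) ‖Σ_{k=1}^m λₖ(Pₖ − P̂ₖ)‖, where ‖·‖ is the operator norm. -/
/-!
Put `A = ∑_{k<m} λₖ (Pₖ - P̂ₖ)`. Since `P̂ⱼ P̂ₖ = 0` for `k < m ≤ j`, the trace on the left is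
`∑_{m ≤ j < n} λ̂ⱼ⁻¹ tr (P̂ⱼ A)`, and each `tr (P̂ⱼ A) = ∑ₖ λₖ tr (P̂ⱼ Pₖ)` is nonnegative, so it is
at most `λ̂ₙ⁻¹ ∑_{m ≤ j < n} tr (P̂ⱼ A)`. Summing over all `j < n` instead gives `tr (R A) ≤ 0` for
the projection `R = ∑_{j<n} P̂ⱼ`, because `tr (R Pₖ) ≤ tr Pₖ = 1 = tr (R P̂ₖ)`; and each of the
`m` missing terms satisfies `-tr (P̂ⱼ A) ≤ ‖A‖`. Hence the left side is at most `m ‖A‖ / λ̂ₙ`.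
-/

open Matrix Finset

lemma orthogonalIdempotents_of_finset {R κ : Type*} [Semiring R] {e : κ → R} {s : Finset κ}
    (hi : ∀ i ∈ s, IsIdempotentElem (e i)) (ho : ∀ i ∈ s, ∀ j ∈ s, i ≠ j → e i * e j = 0) :
    OrthogonalIdempotents fun i : s => e i :=
  ⟨fun i => hi i i.2, fun i j hij => ho i i.2 j j.2 (Subtype.val_injective.ne hij)⟩

lemma isStarProjection_sum_of_mul_eq_zero {R κ : Type*} [Semiring R] [StarRing R] {e : κ → R}
    {s : Finset κ} (he : ∀ i ∈ s, IsStarProjection (e i))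
    (ho : ∀ i ∈ s, ∀ j ∈ s, i ≠ j → e i * e j = 0) : IsStarProjection (∑ i ∈ s, e i) where
  isIdempotentElem := by
    simpa only [sum_coe_sort] using (orthogonalIdempotents_of_finset
      (fun i hi => (he i hi).isIdempotentElem) ho).isIdempotentElem_sum (s := univ)
  isSelfAdjoint := isSelfAdjoint_sum s fun i hi => (he i hi).isSelfAdjoint

lemma mul_sum_of_mem_of_mul_eq_zero {R κ : Type*} [Semiring R] {e : κ → R} {s : Finset κ}
    (hi : ∀ i ∈ s, IsIdempotentElem (e i)) (ho : ∀ i ∈ s, ∀ j ∈ s, i ≠ j → e i * e j = 0)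
    {k : κ} (hk : k ∈ s) : e k * ∑ i ∈ s, e i = e k := by
  simpa only [sum_coe_sort] using
    (orthogonalIdempotents_of_finset hi ho).mul_sum_of_mem (i := ⟨k, hk⟩) (mem_univ _)

lemma sum_Ico_le_of_sum_range_nonpos {f : ℕ → ℝ} {m n : ℕ} (hmn : m ≤ n) {c : ℝ}
    (hn : ∑ j ∈ range n, f j ≤ 0) (hm : ∀ j < m, -f j ≤ c) :
    ∑ j ∈ Ico m n, f j ≤ m * c := by
  rw [← sum_range_add_sum_Ico f hmn] at hn
  have := sum_le_sum fun j hj => hm j (mem_range.1 hj)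
  rw [sum_neg_distrib, sum_const, card_range, nsmul_eq_mul] at this
  linarith

namespace Matrix

variable {ι κ : Type*} [Fintype ι]

lemma isStarProjection_iff_transpose {Q : Matrix ι ι ℝ} :
    IsStarProjection Q ↔ Q * Q = Q ∧ Qᵀ = Q := by
  rw [isStarProjection_iff', star_eq_conjTranspose, conjTranspose_eq_transpose_of_trivial]

lemma IsStarProjection.transpose_eq {Q : Matrix ι ι ℝ} (hQ : IsStarProjection Q) : Qᵀ = Q :=
  (isStarProjection_iff_transpose.1 hQ).2

lemma trace_transpose_mul_mul_eq_sum_dotProduct (Q M : Matrix ι ι ℝ) :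
    (Qᵀ * M * Q).trace = ∑ j, (fun i => Q i j) ⬝ᵥ (M *ᵥ fun i => Q i j) := by
  rw [Matrix.mul_assoc]
  rfl

lemma trace_mul_nonneg_of_isStarProjection {Q R : Matrix ι ι ℝ} (hQ : IsStarProjection Q)
    (hR : IsStarProjection R) : 0 ≤ (Q * R).trace := by
  have := (posSemidef_conjTranspose_mul_self (R * Q)).trace_nonneg
  rwa [conjTranspose_eq_transpose_of_trivial, transpose_mul, hQ.transpose_eq, hR.transpose_eq,
    Matrix.mul_assoc, ← Matrix.mul_assoc R R Q, hR.isIdempotentElem.eq, ← Matrix.mul_assoc,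
    trace_mul_cycle, hQ.isIdempotentElem.eq] at this

lemma mul_sum_smul_sub_of_mul_eq_zero {Q : Matrix ι ι ℝ} {P Phat : κ → Matrix ι ι ℝ}
    {c : κ → ℝ} {s : Finset κ} (h : ∀ k ∈ s, Q * Phat k = 0) :
    Q * ∑ k ∈ s, c k • (P k - Phat k) = ∑ k ∈ s, c k • (Q * P k) := by
  rw [mul_sum]
  exact sum_congr rfl fun k hk => by rw [Matrix.mul_smul, Matrix.mul_sub, h k hk, sub_zero]

lemma trace_mul_sum_smul_sub_nonneg {Q : Matrix ι ι ℝ} (hQ : IsStarProjection Q)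
    {P Phat : κ → Matrix ι ι ℝ} {c : κ → ℝ} {s : Finset κ} (hQPhat : ∀ k ∈ s, Q * Phat k = 0)
    (hP : ∀ k ∈ s, IsStarProjection (P k)) (hc : ∀ k ∈ s, 0 ≤ c k) :
    0 ≤ (Q * ∑ k ∈ s, c k • (P k - Phat k)).trace := by
  rw [mul_sum_smul_sub_of_mul_eq_zero hQPhat, trace_sum]
  refine sum_nonneg fun k hk => ?_
  rw [trace_smul, smul_eq_mul]
  exact mul_nonneg (hc k hk) (trace_mul_nonneg_of_isStarProjection hQ (hP k hk))

lemma trace_sum_sum_div_smul_mul_eq {P Phat : κ → Matrix ι ι ℝ} {c w : κ → ℝ} {s t : Finset κ}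
    (h : ∀ j ∈ t, ∀ k ∈ s, Phat j * Phat k = 0) :
    (∑ j ∈ t, ∑ k ∈ s, (c k / w j) • (Phat j * P k)).trace
      = ∑ j ∈ t, (w j)⁻¹ * (Phat j * ∑ k ∈ s, c k • (P k - Phat k)).trace := by
  rw [trace_sum]
  refine sum_congr rfl fun j hj => ?_
  simp only [mul_sum_smul_sub_of_mul_eq_zero (h j hj), trace_sum, trace_smul, smul_eq_mul,
    mul_sum, div_eq_inv_mul, mul_assoc]

variable [DecidableEq ι]

lemma trace_mul_le_trace_of_isStarProjection {Q R : Matrix ι ι ℝ} (hQ : IsStarProjection Q)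
    (hR : IsStarProjection R) : (Q * R).trace ≤ R.trace := by
  have := trace_mul_nonneg_of_isStarProjection hQ.one_sub hR
  rwa [Matrix.sub_mul, Matrix.one_mul, trace_sub, sub_nonneg] at this

lemma trace_mul_sum_smul_sub_nonpos {Q : Matrix ι ι ℝ} (hQ : IsStarProjection Q)
    {P Phat : κ → Matrix ι ι ℝ} {c : κ → ℝ} {s : Finset κ} (hPhatQ : ∀ k ∈ s, Phat k * Q = Phat k)
    (hP : ∀ k ∈ s, IsStarProjection (P k)) (hPt : ∀ k ∈ s, (P k).trace = (Phat k).trace)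
    (hc : ∀ k ∈ s, 0 ≤ c k) :
    (Q * ∑ k ∈ s, c k • (P k - Phat k)).trace ≤ 0 := by
  rw [mul_sum, trace_sum]
  refine sum_nonpos fun k hk => ?_
  rw [Matrix.mul_smul, Matrix.mul_sub, trace_smul, trace_sub, trace_mul_comm Q (Phat k),
    hPhatQ k hk, ← hPt k hk, smul_eq_mul]
  exact mul_nonpos_of_nonneg_of_nonpos (hc k hk)
    (sub_nonpos.2 (trace_mul_le_trace_of_isStarProjection hQ (hP k hk)))

lemma opNorm_nonneg (A : Matrix ι ι ℝ) : 0 ≤ opNorm A := norm_nonneg _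

lemma opNorm_neg (A : Matrix ι ι ℝ) : opNorm (-A) = opNorm A := by
  rw [opNorm, opNorm, map_neg, map_neg, norm_neg]

lemma dotProduct_mulVec_le_opNorm_mul (B : Matrix ι ι ℝ) (v : ι → ℝ) :
    v ⬝ᵥ (B *ᵥ v) ≤ opNorm B * (v ⬝ᵥ v) := by
  set x : EuclideanSpace ℝ ι := WithLp.toLp 2 v
  set T := LinearMap.toContinuousLinearMap (Matrix.toEuclideanLin B)
  have hquad : v ⬝ᵥ (B *ᵥ v) = inner ℝ x (T x) := by rw [dotProduct_comm]; rfl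
  have hsq : v ⬝ᵥ v = ‖x‖ * ‖x‖ := by rw [← real_inner_self_eq_norm_mul_norm]; rfl
  calc v ⬝ᵥ (B *ᵥ v) = inner ℝ x (T x) := hquad
    _ ≤ ‖x‖ * ‖T x‖ := real_inner_le_norm x (T x)
    _ ≤ ‖x‖ * (‖T‖ * ‖x‖) := by gcongr; exact T.le_opNorm x
    _ = opNorm B * (v ⬝ᵥ v) := by rw [hsq, opNorm]; ring

lemma trace_mul_le_opNorm_mul_trace {Q : Matrix ι ι ℝ} (hQ : IsStarProjection Q)
    (B : Matrix ι ι ℝ) : (Q * B).trace ≤ opNorm B * Q.trace := by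
  have hQs := hQ.transpose_eq
  calc (Q * B).trace = (Qᵀ * B * Q).trace := by
        rw [hQs, trace_mul_cycle, hQ.isIdempotentElem.eq]
    _ = ∑ j, (fun i => Q i j) ⬝ᵥ (B *ᵥ fun i => Q i j) :=
      trace_transpose_mul_mul_eq_sum_dotProduct Q B
    _ ≤ ∑ j, opNorm B * ((fun i => Q i j) ⬝ᵥ fun i => Q i j) :=
      sum_le_sum fun j _ => dotProduct_mulVec_le_opNorm_mul B _
    _ = opNorm B * (Qᵀ * 1 * Q).trace := by
      rw [trace_transpose_mul_mul_eq_sum_dotProduct, mul_sum]; simp only [one_mulVec]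
    _ = opNorm B * Q.trace := by rw [Matrix.mul_one, hQs, hQ.isIdempotentElem.eq]

lemma sum_Ico_trace_mul_le_mul_opNorm {P Phat : ℕ → Matrix ι ι ℝ} {c : ℕ → ℝ} {m n : ℕ}
    (hmn : m ≤ n) (hPhat : ∀ j < n, IsStarProjection (Phat j))
    (hPhorth : ∀ i < n, ∀ j < n, i ≠ j → Phat i * Phat j = 0)
    (hPhrank : ∀ j < n, (Phat j).trace = 1) (hP : ∀ k < m, IsStarProjection (P k))
    (hPrank : ∀ k < m, (P k).trace = 1) (hc : ∀ k < m, 0 ≤ c k) :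
    ∑ j ∈ Ico m n, (Phat j * ∑ k ∈ range m, c k • (P k - Phat k)).trace
      ≤ m * opNorm (∑ k ∈ range m, c k • (P k - Phat k)) := by
  set A := ∑ k ∈ range m, c k • (P k - Phat k)
  have hPhat' : ∀ j ∈ range n, IsStarProjection (Phat j) := fun j hj => hPhat j (mem_range.1 hj)
  have hPhorth' : ∀ i ∈ range n, ∀ j ∈ range n, i ≠ j → Phat i * Phat j = 0 :=
    fun i hi j hj => hPhorth i (mem_range.1 hi) j (mem_range.1 hj)
  refine sum_Ico_le_of_sum_range_nonpos hmn ?_ fun j hj => ?_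
  · rw [← trace_sum, ← sum_mul]
    refine trace_mul_sum_smul_sub_nonpos (isStarProjection_sum_of_mul_eq_zero hPhat' hPhorth')
      (fun k hk => mul_sum_of_mem_of_mul_eq_zero (fun i hi => (hPhat' i hi).isIdempotentElem)
        hPhorth' (range_subset_range.2 hmn hk)) (fun k hk => hP k (mem_range.1 hk))
      (fun k hk => ?_) fun k hk => hc k (mem_range.1 hk)
    rw [hPrank k (mem_range.1 hk), hPhrank k ((mem_range.1 hk).trans_le hmn)]
  · have hjn := hj.trans_le hmn
    simpa [trace_neg, opNorm_neg, hPhrank j hjn] using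
      trace_mul_le_opNorm_mul_trace (hPhat j hjn) (-A)

end Matrix

theorem nonspiked_spiked_cross_trace_bound_general {d : ℕ} (n m : ℕ)
    (hn1 : 1 ≤ n) (hmn : m ≤ n) (hmd : m ≤ d)
    (P Phat : ℕ → Matrix (Fin d) (Fin d) ℝ) (lam lamhat : ℕ → ℝ)
    -- rank-one mutually orthogonal projectors :
    (hPsymm : ∀ j < d, (P j)ᵀ = P j)
    (hPidem : ∀ j < d, P j * P j = P j)
    (hPrank : ∀ j < d, (P j).trace = 1)
    (hPhsymm : ∀ j < n, (Phat j)ᵀ = Phat j)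
    (hPhidem : ∀ j < n, Phat j * Phat j = Phat j)
    (hPhorth : ∀ i < n, ∀ j < n, i ≠ j → Phat i * Phat j = 0)
    (hPhrank : ∀ j < n, (Phat j).trace = 1)
    -- eigenvalues :
    (hlam_nonneg : ∀ k < d, 0 ≤ lam k)
    (hlamhat_mono : ∀ i j, i ≤ j → j < n → lamhat j ≤ lamhat i)
    (hlamhat_pos : ∀ j < n, 0 < lamhat j) :
    (∑ j ∈ Ico m n, ∑ k ∈ range m, (lam k / lamhat j) • (Phat j * P k)).trace
      ≤ (2 * m / lamhat (n - 1))
          * opNorm (∑ k ∈ range m, lam k • (P k - Phat k)) := by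
  set A := ∑ k ∈ range m, lam k • (P k - Phat k)
  have hP : ∀ k < m, IsStarProjection (P k) := fun k hk =>
    isStarProjection_iff_transpose.2 ⟨hPidem k (hk.trans_le hmd), hPsymm k (hk.trans_le hmd)⟩
  have hPhat : ∀ j < n, IsStarProjection (Phat j) := fun j hj =>
    isStarProjection_iff_transpose.2 ⟨hPhidem j hj, hPhsymm j hj⟩
  have hcross : ∀ j ∈ Ico m n, ∀ k ∈ range m, Phat j * Phat k = 0 := fun j hj k hk =>
    hPhorth j (mem_Ico.1 hj).2 k ((mem_range.1 hk).trans_le hmn) (by grind)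
  have hlast : 0 < lamhat (n - 1) := hlamhat_pos (n - 1) (by omega)
  calc (∑ j ∈ Ico m n, ∑ k ∈ range m, (lam k / lamhat j) • (Phat j * P k)).trace
      = ∑ j ∈ Ico m n, (lamhat j)⁻¹ * (Phat j * A).trace := trace_sum_sum_div_smul_mul_eq hcross
    _ ≤ ∑ j ∈ Ico m n, (lamhat (n - 1))⁻¹ * (Phat j * A).trace := by
        refine sum_le_sum fun j hj => ?_
        gcongr
        · exact trace_mul_sum_smul_sub_nonneg (hPhat j (mem_Ico.1 hj).2) (hcross j hj)
            (fun k hk => hP k (mem_range.1 hk))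
            fun k hk => hlam_nonneg k ((mem_range.1 hk).trans_le hmd)
        · exact hlamhat_mono j (n - 1) (by grind) (by omega)
    _ ≤ (lamhat (n - 1))⁻¹ * (m * opNorm A) := by
        rw [← mul_sum]
        gcongr
        exact sum_Ico_trace_mul_le_mul_opNorm hmn hPhat hPhorth hPhrank hP
          (fun k hk => hPrank k (hk.trans_le hmd)) fun k hk => hlam_nonneg k (hk.trans_le hmd)
    _ ≤ 2 * ((lamhat (n - 1))⁻¹ * (m * opNorm A)) :=
        le_mul_of_one_le_left (by have := opNorm_nonneg A; positivity) one_le_two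
    _ = 2 * m / lamhat (n - 1) * opNorm A := by ring

/-- Cross-term trace bound:
`Tr(Σ_{m<j≤n} Σ_{k≤m} (λₖ/λ̂ⱼ) P̂ⱼPₖ) ≤ (2m/λ̂ₙ) ‖Σ_{k≤m} λₖ(Pₖ − P̂ₖ)‖`,
for rank-one mutually orthogonal spectral projectors `P̂ⱼ` (of `Σ̂`) and `Pₖ`
(of `Σ`), with `λ̂₁ ≥ … ≥ λ̂ₙ > 0` and `λₖ ≥ 0`.
(0-based indexing: `λ̂ₙ` is `lamhat (n-1)`.) -/
theorem nonspiked_spiked_cross_trace_bound {d : ℕ} (n m : ℕ)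
    (hn1 : 1 ≤ n) (hmn : m ≤ n) (hmd : m ≤ d)
    (P Phat : ℕ → Matrix (Fin d) (Fin d) ℝ) (lam lamhat : ℕ → ℝ)
    -- rank-one mutually orthogonal projectors :
    (hPsymm : ∀ j < d, (P j)ᵀ = P j)
    (hPidem : ∀ j < d, P j * P j = P j)
    (hPorth : ∀ i < d, ∀ j < d, i ≠ j → P i * P j = 0)
    (hPrank : ∀ j < d, (P j).trace = 1)
    (hPhsymm : ∀ j < n, (Phat j)ᵀ = Phat j)
    (hPhidem : ∀ j < n, Phat j * Phat j = Phat j)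
    (hPhorth : ∀ i < n, ∀ j < n, i ≠ j → Phat i * Phat j = 0)
    (hPhrank : ∀ j < n, (Phat j).trace = 1)
    -- eigenvalues :
    (hlam_nonneg : ∀ k < d, 0 ≤ lam k)
    (hlamhat_mono : ∀ i j, i ≤ j → j < n → lamhat j ≤ lamhat i)
    (hlamhat_pos : ∀ j < n, 0 < lamhat j) :
    (∑ j ∈ Ico m n, ∑ k ∈ range m, (lam k / lamhat j) • (Phat j * P k)).trace
      ≤ (2 * m / lamhat (n - 1))
          * opNorm (∑ k ∈ range m, lam k • (P k - Phat k)) :=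
  nonspiked_spiked_cross_trace_bound_general n m hn1 hmn hmd P Phat lam lamhat hPsymm hPidem hPrank
    hPhsymm hPhidem hPhorth hPhrank hlam_nonneg hlamhat_mono hlamhat_pos
end
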